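/- arXiv:2012.13357 — 10 statements merged into one kernel-verified Lean document; each statement's English description precedes it below -/
import Mathlib

section
/- Let S = ⟨d_1,…,d_m⟩ be a numerical semigroup with Hilbert numerator Q(S;z). Then Q^{(r)}(1) = 0 for every 0 ≤ r < m−1, and for every r ≥ m−1 one has Q^{(r)}(1) = (−1)^{m−1} (m−1)! · binom(r, m−1) · Π^{(r−m+1)}(1). -/
open Polynomial PowerSeries Finset

lemma myaux_eval_deriv_pow (n j : ℕ) :
    (Polynomial.derivative^[j] ((Polynomial.X - 1 : ℚ[X]) ^ n)).eval 1
      = if j = n then (n.factorial : ℚ) else 0 := by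
  have h1 : (1 : ℚ[X]) = Polynomial.C 1 := by simp
  rw [h1, Polynomial.iterate_derivative_X_sub_pow]
  rcases eq_or_ne j n with rfl | hne
  · simp [Nat.descFactorial_self]
  · rw [if_neg hne]
    rcases lt_or_gt_of_ne hne with h | h
    · have h2 : 0 < n - j := Nat.sub_pos_of_lt h
      simp [nsmul_eq_mul, zero_pow h2.ne']
    · simp [Nat.descFactorial_eq_zero_iff_lt.mpr h]

lemma myaux_eval_deriv_mul (n : ℕ) (P : ℚ[X]) (r : ℕ) :
    (Polynomial.derivative^[r] ((Polynomial.X - 1 : ℚ[X]) ^ n * P)).eval 1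
      = if n ≤ r then
          (n.factorial : ℚ) * (r.choose n) * (Polynomial.derivative^[r - n] P).eval 1
        else 0 := by
  rw [Polynomial.iterate_derivative_mul, Polynomial.eval_finset_sum]
  have hterm : ∀ k ∈ Finset.range (r + 1),
      ((r.choose k) • (Polynomial.derivative^[r - k] ((Polynomial.X - 1 : ℚ[X]) ^ n)
          * Polynomial.derivative^[k] P)).eval 1
        = (r.choose k : ℚ) * (if r - k = n then (n.factorial : ℚ) else 0)
            * (Polynomial.derivative^[k] P).eval 1 := by
    intro k _
    rw [Polynomial.eval_smul, Polynomial.eval_mul, myaux_eval_deriv_pow]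
    simp [nsmul_eq_mul, mul_assoc]
  rw [Finset.sum_congr rfl hterm]
  by_cases hnr : n ≤ r
  · rw [if_pos hnr]
    rw [Finset.sum_eq_single_of_mem (r - n) (Finset.mem_range.mpr (by omega))]
    · rw [if_pos (by omega), Nat.choose_symm hnr]; ring
    · intro k hk hkne
      rw [Finset.mem_range] at hk
      rw [if_neg (by omega)]
      ring
  · rw [if_neg hnr]
    apply Finset.sum_eq_zero
    intro k hk
    rw [Finset.mem_range] at hk
    rw [if_neg (by omega)]
    ring

/-- For the Hilbert numerator `Q(S;z)` of `S = ⟨d₁,…,d_m⟩`,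
`Q^{(r)}(1) = 0` for `0 ≤ r < m−1`, and for `r ≥ m−1`,
`Q^{(r)}(1) = (−1)^{m−1} (m−1)! · C(r, m−1) · Π^{(r−m+1)}(1)`. -/
theorem hilbert_numerator_derivatives_at_one
    (m : ℕ) (d : Fin m → ℕ) (hd : ∀ j, 0 < d j)
    (hgcd : Finset.univ.gcd d = 1)
    (S : Set ℕ) (hS : S = {n : ℕ | ∃ a : Fin m → ℕ, n = ∑ j, a j * d j})
    (Δ : Set ℕ) (hΔ : Δ = {n : ℕ | 0 < n ∧ n ∉ S})
    (hfin : Δ.Finite)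
    (H : PowerSeries ℚ)
    (hH : H = PowerSeries.mk (Set.indicator S (fun _ => (1 : ℚ))))
    (Φ Ψ Pp Q : Polynomial ℚ)
    (hΦ : Φ = ∑ s ∈ hfin.toFinset, Polynomial.X ^ s)
    (hΨ : Ψ = ∏ j, ∑ k ∈ Finset.range (d j), Polynomial.X ^ k)
    (hPp : Pp = Ψ * (1 - (1 - Polynomial.X) * Φ))
    (hQ : (Q : PowerSeries ℚ)
      = H * ∏ j, (1 - (PowerSeries.X : PowerSeries ℚ) ^ (d j))) :
    (∀ r : ℕ, r < m - 1 → (Polynomial.derivative^[r] Q).eval 1 = 0) ∧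
    (∀ r : ℕ, m - 1 ≤ r →
      (Polynomial.derivative^[r] Q).eval 1
        = (-1 : ℚ) ^ (m - 1) * (Nat.factorial (m - 1)) * (r.choose (m - 1))
          * (Polynomial.derivative^[r - (m - 1)] Pp).eval 1) := by
  -- m ≥ 1
  have hm : 1 ≤ m := by
    rcases Nat.eq_zero_or_pos m with rfl | h
    · exact absurd hgcd (by simp)
    · exact h
  obtain ⟨n, rfl⟩ : ∃ n, m = n + 1 := ⟨m - 1, by omega⟩
  simp only [Nat.add_sub_cancel]
  -- geometric series factorization, polynomial form
  have hgeom : ∀ N : ℕ, ((1 : ℚ[X]) - Polynomial.X ^ N)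
      = (1 - Polynomial.X) * ∑ k ∈ Finset.range N, Polynomial.X ^ k := by
    intro N
    have h := geom_sum_mul (Polynomial.X : ℚ[X]) N
    linear_combination h
  have hprodpoly : (∏ j, ((1 : ℚ[X]) - Polynomial.X ^ d j))
      = (1 - Polynomial.X) ^ (n + 1) * Ψ := by
    rw [hΨ]
    calc (∏ j, ((1 : ℚ[X]) - Polynomial.X ^ d j))
        = ∏ j, ((1 - Polynomial.X) * ∑ k ∈ Finset.range (d j), Polynomial.X ^ k) :=
          Finset.prod_congr rfl fun j _ => hgeom (d j)
      _ = _ := by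
          rw [Finset.prod_mul_distrib, Finset.prod_const]
          simp
  -- 0 ∈ S
  have h0S : (0 : ℕ) ∈ S := by
    rw [hS]
    exact ⟨fun _ => 0, by simp⟩
  -- H + Φ = mk 1
  have hHΦ : H + (Φ : PowerSeries ℚ) = PowerSeries.mk (fun _ => (1 : ℚ)) := by
    ext k
    rw [map_add, hH, PowerSeries.coeff_mk, PowerSeries.coeff_mk, Polynomial.coeff_coe, hΦ]
    rw [Polynomial.finset_sum_coeff]
    simp only [Polynomial.coeff_X_pow, Finset.sum_ite_eq]
    by_cases hk : k ∈ S
    · rw [Set.indicator_of_mem hk]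
      have hkΔ : k ∉ hfin.toFinset := by
        simp only [Set.Finite.mem_toFinset, hΔ, Set.mem_setOf_eq]
        tauto
      rw [if_neg hkΔ]; ring
    · rw [Set.indicator_of_notMem hk]
      have hkΔ : k ∈ hfin.toFinset := by
        simp only [Set.Finite.mem_toFinset, hΔ, Set.mem_setOf_eq]
        refine ⟨Nat.pos_of_ne_zero ?_, hk⟩
        rintro rfl
        exact hk h0S
      rw [if_pos hkΔ]; ring
  -- (1 - X) * mk 1 = 1
  have hone : ((1 : PowerSeries ℚ) - PowerSeries.X) * PowerSeries.mk (fun _ => (1 : ℚ)) = 1 := by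
    ext k
    rw [sub_mul, one_mul, map_sub]
    cases k with
    | zero => simp
    | succ j => simp [PowerSeries.coeff_succ_X_mul, PowerSeries.coeff_one]
  have hHone : ((1 : PowerSeries ℚ) - PowerSeries.X) * H
      = 1 - ((1 : PowerSeries ℚ) - PowerSeries.X) * (Φ : PowerSeries ℚ) := by
    linear_combination ((1 : PowerSeries ℚ) - PowerSeries.X) * hHΦ + hone
  -- coercion of the product
  have hcoeprod : ((∏ j, ((1 : ℚ[X]) - Polynomial.X ^ d j) : ℚ[X]) : PowerSeries ℚ)
      = ∏ j, ((1 : PowerSeries ℚ) - PowerSeries.X ^ d j) := by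
    rw [← Polynomial.coeToPowerSeries.ringHom_apply, map_prod]
    refine Finset.prod_congr rfl fun j _ => ?_
    simp [Polynomial.coeToPowerSeries.ringHom_apply, Polynomial.coe_sub, Polynomial.coe_pow]
  -- the key polynomial identity
  have hQeq : Q = (1 - Polynomial.X) ^ n * Pp := by
    rw [← Polynomial.coe_inj, hQ, ← hcoeprod, hprodpoly, hPp]
    simp only [Polynomial.coe_mul, Polynomial.coe_pow, Polynomial.coe_sub, Polynomial.coe_one,
      Polynomial.coe_X]
    rw [pow_succ]
    linear_combination ((1 - PowerSeries.X) ^ n * (Ψ : PowerSeries ℚ)) * hHone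
  have hsign : Q = Polynomial.C ((-1 : ℚ) ^ n) * ((Polynomial.X - 1 : ℚ[X]) ^ n * Pp) := by
    rw [hQeq, map_pow, map_neg, map_one, ← mul_assoc, ← mul_pow]
    have hb : (-1 : ℚ[X]) * (Polynomial.X - 1) = 1 - Polynomial.X := by ring
    rw [hb]
  have hmain : ∀ r : ℕ, (Polynomial.derivative^[r] Q).eval 1
      = (-1 : ℚ) ^ n * (if n ≤ r then
          (n.factorial : ℚ) * (r.choose n) * (Polynomial.derivative^[r - n] Pp).eval 1
        else 0) := by
    intro r
    rw [hsign, Polynomial.iterate_derivative_C_mul, Polynomial.eval_mul, Polynomial.eval_C,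
      myaux_eval_deriv_mul]
  constructor
  · intro r hr
    rw [hmain, if_neg (by omega)]
    ring
  · intro r hr
    rw [hmain, if_pos hr]
    ring
end

section
/- Let S = ⟨d_1,…,d_m⟩ be a numerical semigroup and Π(z) = Ψ(z)(1 − (1−z)Φ(z)). Then Π'(1) = π_m · [ (σ_1 − m)/2 + G_0 ], where G_0 is the genus of S. -/
open Polynomial Finset

lemma derivative_finset_prod' {ι : Type*} [DecidableEq ι] (s : Finset ι) (f : ι → ℚ[X]) :
    derivative (∏ i ∈ s, f i) = ∑ i ∈ s, (∏ j ∈ s.erase i, f j) * derivative (f i) := by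
  induction s using Finset.induction_on with
  | empty => simp
  | @insert a s ha ih =>
    rw [Finset.prod_insert ha, derivative_mul, ih, Finset.sum_insert ha,
      Finset.erase_insert ha, Finset.mul_sum]
    have hrw : ∀ i ∈ s, (∏ j ∈ (insert a s).erase i, f j) * derivative (f i)
        = f a * ((∏ j ∈ s.erase i, f j) * derivative (f i)) := by
      intro i hi
      have hia : a ≠ i := fun h => ha (h ▸ hi)
      rw [Finset.erase_insert_of_ne hia,
        Finset.prod_insert (fun h => ha (Finset.mem_of_mem_erase h)), mul_assoc]
    rw [Finset.sum_congr rfl hrw]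
    ring

/-- `Π'(1) = π_m · [(σ₁ − m)/2 + G₀]` where `Π(z) = Ψ(z)(1 − (1−z)Φ(z))`
and `G₀` is the genus (number of gaps) of `S = ⟨d₁,…,d_m⟩`. -/
theorem pi_first_derivative_at_one
    (m : ℕ) (d : Fin m → ℕ) (hd : ∀ j, 0 < d j)
    (hgcd : Finset.univ.gcd d = 1)
    (S : Set ℕ) (hS : S = {n : ℕ | ∃ a : Fin m → ℕ, n = ∑ j, a j * d j})
    (Δ : Set ℕ) (hΔ : Δ = {n : ℕ | 0 < n ∧ n ∉ S})
    (hfin : Δ.Finite)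
    (Φ Ψ Pp : Polynomial ℚ)
    (hΦ : Φ = ∑ s ∈ hfin.toFinset, Polynomial.X ^ s)
    (hΨ : Ψ = ∏ j, ∑ k ∈ Finset.range (d j), Polynomial.X ^ k)
    (hPp : Pp = Ψ * (1 - (1 - Polynomial.X) * Φ)) :
    (Polynomial.derivative Pp).eval 1
      = (∏ j, (d j : ℚ))
          * (((∑ j, (d j : ℚ)) - m) / 2 + (hfin.toFinset.card : ℚ)) := by
  have hsum : ∀ n : ℕ, ∑ k ∈ Finset.range n, (k : ℚ) = n * (n - 1) / 2 := by
    intro n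
    induction n with
    | zero => simp
    | succ n ih => rw [Finset.sum_range_succ, ih]; push_cast; ring
  have hΨ1 : Ψ.eval 1 = ∏ j, (d j : ℚ) := by
    simp [hΨ, eval_prod, eval_finset_sum]
  have hΦ1 : Φ.eval 1 = (hfin.toFinset.card : ℚ) := by
    simp [hΦ, eval_finset_sum]
  have hgeom : ∀ n : ℕ, (derivative (∑ k ∈ Finset.range n, (X : ℚ[X]) ^ k)).eval 1
      = n * (n - 1) / 2 := by
    intro n
    rw [derivative_sum]
    simp only [derivative_X_pow, eval_finset_sum, eval_mul, eval_natCast, eval_pow,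
      eval_one, one_pow, mul_one, eval_C, eval_X]
    exact hsum n
  have hΨ'1 : (derivative Ψ).eval 1
      = (∏ j, (d j : ℚ)) * ((∑ j, (d j : ℚ)) - m) / 2 := by
    rw [hΨ, derivative_finset_prod', eval_finset_sum]
    have hterm : ∀ j : Fin m,
        ((∏ k ∈ Finset.univ.erase j, ∑ l ∈ Finset.range (d k), (X : ℚ[X]) ^ l) *
          derivative (∑ l ∈ Finset.range (d j), (X : ℚ[X]) ^ l)).eval 1
        = (∏ j, (d j : ℚ)) * ((d j : ℚ) - 1) / 2 := by
      intro j
      rw [eval_mul, hgeom, eval_prod]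
      have h1 : ∀ k : Fin m, (∑ l ∈ Finset.range (d k), (X : ℚ[X]) ^ l).eval 1 = (d k : ℚ) := by
        intro k; simp [eval_finset_sum]
      simp only [h1]
      have h2 : (∏ k ∈ Finset.univ.erase j, (d k : ℚ)) * (d j : ℚ) = ∏ k, (d k : ℚ) :=
        Finset.prod_erase_mul _ _ (Finset.mem_univ j)
      rw [← h2]
      ring
    rw [Finset.sum_congr rfl (fun j _ => hterm j)]
    rw [← Finset.sum_div, ← Finset.mul_sum]
    congr 1
    rw [Finset.sum_sub_distrib]
    simp
  have key : (derivative Pp).eval 1 = (derivative Ψ).eval 1 + Ψ.eval 1 * Φ.eval 1 := by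
    subst hPp
    simp [derivative_mul, derivative_sub, derivative_one, derivative_X]
  rw [key, hΨ'1, hΨ1, hΦ1]
  ring
end

section
/- Let S = ⟨d_1,…,d_m⟩ be a numerical semigroup and Π(z) = Ψ(z)(1 − (1−z)Φ(z)). Then Π''(1) = π_m · [ ((σ_1 − m)/2)² + (σ_2 − 6σ_1 + 5m)/12 + (σ_1 − m)·G_0 + 2·G_1 ]. -/
open Polynomial Finset

lemma cast_mul_pred (k : ℕ) : (k:ℚ) * ((k-1:ℕ):ℚ) = (k:ℚ) * ((k:ℚ) - 1) := by
  cases k with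
  | zero => simp
  | succ n => push_cast; ring

lemma sum_range_cast (dn : ℕ) : ∑ k ∈ Finset.range dn, (k:ℚ) = dn*(dn-1)/2 := by
  induction dn with
  | zero => simp
  | succ n ih => rw [Finset.sum_range_succ, ih]; push_cast; ring

lemma sum_range_cast2 (dn : ℕ) :
    ∑ k ∈ Finset.range dn, (k:ℚ)*((k:ℚ)-1) = dn*(dn-1)*(dn-2)/3 := by
  induction dn with
  | zero => simp
  | succ n ih => rw [Finset.sum_range_succ, ih]; push_cast; ring

lemma geom_eval (dn : ℕ) :
    (∑ k ∈ Finset.range dn, (X:ℚ[X])^k).eval 1 = dn := by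
  simp [eval_finset_sum]

lemma geom_deriv (dn : ℕ) :
    (derivative (∑ k ∈ Finset.range dn, (X:ℚ[X])^k)).eval 1 = dn*((dn:ℚ)-1)/2 := by
  rw [derivative_sum]
  simp only [derivative_X_pow, eval_finset_sum, eval_mul, eval_C, eval_pow, eval_X, one_pow, mul_one]
  rw [sum_range_cast]

lemma geom_deriv2 (dn : ℕ) :
    (derivative (derivative (∑ k ∈ Finset.range dn, (X:ℚ[X])^k))).eval 1
      = dn*((dn:ℚ)-1)*((dn:ℚ)-2)/3 := by
  rw [derivative_sum]
  simp only [derivative_X_pow, derivative_mul, derivative_C, zero_mul, zero_add,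
    derivative_sum, eval_finset_sum, eval_mul, eval_C, eval_pow, eval_X, one_pow, mul_one]
  calc ∑ k ∈ Finset.range dn, (k:ℚ) * ((k-1:ℕ):ℚ)
      = ∑ k ∈ Finset.range dn, (k:ℚ) * ((k:ℚ)-1) := by
        exact Finset.sum_congr rfl fun k _ => cast_mul_pred k
    _ = dn*((dn:ℚ)-1)*((dn:ℚ)-2)/3 := sum_range_cast2 dn

lemma prod_derivs {ι : Type*} (s : Finset ι) (f : ι → ℚ[X]) (v w u : ι → ℚ)
    (hv : ∀ j, (f j).eval 1 = v j)
    (hw : ∀ j, (derivative (f j)).eval 1 = v j * w j)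
    (hu : ∀ j, (derivative (derivative (f j))).eval 1 = v j * u j) :
    (∏ j ∈ s, f j).eval 1 = ∏ j ∈ s, v j ∧
    (derivative (∏ j ∈ s, f j)).eval 1 = (∏ j ∈ s, v j) * (∑ j ∈ s, w j) ∧
    (derivative (derivative (∏ j ∈ s, f j))).eval 1
      = (∏ j ∈ s, v j) * ((∑ j ∈ s, w j)^2 - (∑ j ∈ s, (w j)^2) + ∑ j ∈ s, u j) := by
  induction s using Finset.cons_induction with
  | empty => simp
  | cons a s ha ih =>
    obtain ⟨h0, h1, h2⟩ := ih
    rw [Finset.prod_cons]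
    refine ⟨?_, ?_, ?_⟩
    · rw [eval_mul, hv, h0, Finset.prod_cons]
    · rw [derivative_mul, eval_add, eval_mul, eval_mul, hv, hw, h0, h1,
        Finset.prod_cons, Finset.sum_cons]
      ring
    · rw [derivative_mul, derivative_add, derivative_mul, derivative_mul]
      simp only [eval_add, eval_mul, hv, hw, hu, h0, h1, h2]
      rw [Finset.prod_cons, Finset.sum_cons, Finset.sum_cons, Finset.sum_cons]
      ring

/-- `Π''(1) = π_m · [((σ₁ − m)/2)² + (σ₂ − 6σ₁ + 5m)/12 + (σ₁ − m)·G₀ + 2·G₁]`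
where `Π(z) = Ψ(z)(1 − (1−z)Φ(z))` and `G_k = ∑_{s∈Δ} s^k` are the genera of
`S = ⟨d₁,…,d_m⟩`. -/
theorem pi_second_derivative_at_one
    (m : ℕ) (d : Fin m → ℕ) (hd : ∀ j, 0 < d j)
    (hgcd : Finset.univ.gcd d = 1)
    (S : Set ℕ) (hS : S = {n : ℕ | ∃ a : Fin m → ℕ, n = ∑ j, a j * d j})
    (Δ : Set ℕ) (hΔ : Δ = {n : ℕ | 0 < n ∧ n ∉ S})
    (hfin : Δ.Finite)
    (Φ Ψ Pp : Polynomial ℚ)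
    (hΦ : Φ = ∑ s ∈ hfin.toFinset, Polynomial.X ^ s)
    (hΨ : Ψ = ∏ j, ∑ k ∈ Finset.range (d j), Polynomial.X ^ k)
    (hPp : Pp = Ψ * (1 - (1 - Polynomial.X) * Φ)) :
    (Polynomial.derivative^[2] Pp).eval 1
      = (∏ j, (d j : ℚ)) *
          ((((∑ j, (d j : ℚ)) - m) / 2) ^ 2
            + ((∑ j, (d j : ℚ) ^ 2) - 6 * (∑ j, (d j : ℚ)) + 5 * m) / 12
            + ((∑ j, (d j : ℚ)) - m) * (hfin.toFinset.card : ℚ)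
            + 2 * (∑ s ∈ hfin.toFinset, (s : ℚ))) := by
  -- data for Ψ
  set v : Fin m → ℚ := fun j => (d j : ℚ) with hv'
  set w : Fin m → ℚ := fun j => ((d j : ℚ) - 1)/2 with hw'
  set u : Fin m → ℚ := fun j => ((d j : ℚ) - 1)*((d j : ℚ) - 2)/3 with hu'
  obtain ⟨hΨ0, hΨ1, hΨ2⟩ := prod_derivs Finset.univ
    (fun j => ∑ k ∈ Finset.range (d j), (X:ℚ[X])^k) v w u
    (fun j => geom_eval (d j))
    (fun j => by rw [geom_deriv]; simp [hv', hw']; ring)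
    (fun j => by rw [geom_deriv2]; simp [hv', hu']; ring)
  rw [← hΨ] at hΨ0 hΨ1 hΨ2
  -- Φ facts
  have hΦ0 : Φ.eval 1 = (hfin.toFinset.card : ℚ) := by
    rw [hΦ]; simp [eval_finset_sum]
  have hΦ1 : (derivative Φ).eval 1 = ∑ s ∈ hfin.toFinset, (s : ℚ) := by
    rw [hΦ, derivative_sum]
    simp [derivative_X_pow, eval_finset_sum]
  set A : ℚ[X] := 1 - (1 - X) * Φ with hA
  have hA0 : A.eval 1 = 1 := by simp [hA]
  have hA1 : (derivative A).eval 1 = (hfin.toFinset.card : ℚ) := by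
    simp [hA, derivative_sub, derivative_mul, derivative_one, derivative_X, hΦ0]
  have hA2 : (derivative (derivative A)).eval 1 = 2 * ∑ s ∈ hfin.toFinset, (s : ℚ) := by
    simp only [hA, derivative_sub, derivative_mul, derivative_one, derivative_X,
      zero_sub, zero_mul, zero_add, mul_one, one_mul, derivative_neg, derivative_add,
      eval_add, eval_sub, eval_neg, eval_mul, eval_one, eval_X, hΦ1]
    ring_nf
    simp [hΦ1]
  have key : derivative (derivative (Ψ * A))
      = derivative (derivative Ψ) * A + 2 * (derivative Ψ * derivative A)
        + Ψ * derivative (derivative A) := by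
    rw [derivative_mul, derivative_add, derivative_mul, derivative_mul]; ring
  rw [Function.iterate_succ, Function.iterate_one, Function.comp_apply, hPp, key]
  simp only [eval_add, eval_mul, eval_ofNat, hΨ0, hΨ1, hΨ2, hA0, hA1, hA2]
  -- algebraic cleanup
  have hsumw : ∑ j, w j = ((∑ j, (d j : ℚ)) - m)/2 := by
    simp only [hw']
    rw [← Finset.sum_div, Finset.sum_sub_distrib]
    simp [Finset.card_univ]
  have hcomb : (∑ j, u j) - (∑ j, (w j)^2)
      = ((∑ j, (d j : ℚ) ^ 2) - 6 * (∑ j, (d j : ℚ)) + 5 * m) / 12 := by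
    rw [← Finset.sum_sub_distrib]
    have : ∀ j : Fin m, u j - (w j)^2 = ((d j:ℚ)^2 - 6*(d j:ℚ) + 5)/12 := by
      intro j; simp only [hu', hw']; ring
    rw [Finset.sum_congr rfl fun j _ => this j]
    rw [← Finset.sum_div, Finset.sum_add_distrib, Finset.sum_sub_distrib, ← Finset.mul_sum]
    simp [Finset.card_univ, mul_comm]
  rw [hsumw]
  linear_combination (∏ j, (d j : ℚ)) * hcomb
end

section
/- Let S = ⟨d_1,…,d_m⟩ be a numerical semigroup. Then the alternating power sum of syzygy degrees of degree m satisfies ℂ_m(S) = (−1)^m · m! · π_m · K_0, where K_0 = G_0 + δ_1 and δ_1 = (σ_1 − 1)/2. -/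
open Polynomial PowerSeries Finset

lemma coeff_one_prod {ι : Type*} [DecidableEq ι] (s : Finset ι) (f : ι → PowerSeries ℚ) :
    PowerSeries.coeff 1 (∏ j ∈ s, f j)
      = ∑ k ∈ s, PowerSeries.coeff 1 (f k)
          * ∏ j ∈ s.erase k, PowerSeries.constantCoeff (f j) := by
  induction s using Finset.induction with
  | empty => simp
  | @insert a s ha ih =>
    rw [Finset.prod_insert ha, PowerSeries.coeff_one_mul, ih, Finset.sum_insert ha,
      Finset.erase_insert ha, map_prod, Finset.sum_mul]
    congr 1
    apply Finset.sum_congr rfl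
    intro k hk
    rw [Finset.erase_insert_of_ne (by rintro rfl; exact ha hk),
      Finset.prod_insert (by simp [ha])]
    ring

noncomputable def hser (d : ℕ) : PowerSeries ℚ :=
  PowerSeries.mk fun n => -((d : ℚ) ^ (n + 1) / (n + 1).factorial)

lemma one_sub_rescale_exp (d : ℕ) :
    (1 : PowerSeries ℚ) - rescale (d : ℚ) (PowerSeries.exp ℚ) = PowerSeries.X * hser d := by
  ext n
  cases n with
  | zero =>
    rw [PowerSeries.coeff_zero_eq_constantCoeff, map_mul, PowerSeries.constantCoeff_X,
      zero_mul, map_sub, map_one]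
    simp [PowerSeries.coeff_rescale, ← PowerSeries.coeff_zero_eq_constantCoeff,
      PowerSeries.coeff_exp]
  | succ n =>
    rw [PowerSeries.coeff_succ_X_mul]
    simp [hser, PowerSeries.coeff_rescale, PowerSeries.coeff_exp,
      PowerSeries.coeff_one, Nat.succ_ne_zero, div_eq_mul_inv]

lemma hser_coeff0 (d : ℕ) : PowerSeries.constantCoeff (hser d) = -(d : ℚ) := by
  simp [hser, ← PowerSeries.coeff_zero_eq_constantCoeff]

lemma hser_coeff1 (d : ℕ) : PowerSeries.coeff 1 (hser d) = -((d : ℚ) ^ 2 / 2) := by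
  simp [hser]

lemma coeff_aeval_exp (P : Polynomial ℚ) (n : ℕ) :
    PowerSeries.coeff n (Polynomial.aeval (PowerSeries.exp ℚ) P)
      = (∑ s ∈ P.support, P.coeff s * (s : ℚ) ^ n) / n.factorial := by
  rw [Polynomial.aeval_def, Polynomial.eval₂_eq_sum, Polynomial.sum, map_sum,
    Finset.sum_div]
  apply Finset.sum_congr rfl
  intro s _
  simp only [PowerSeries.exp_pow_eq_rescale_exp, PowerSeries.algebraMap_apply,
    Algebra.algebraMap_self, RingHom.id_apply, PowerSeries.coeff_C_mul,
    PowerSeries.coeff_rescale, PowerSeries.coeff_exp]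
  field_simp

lemma one_ser_mul :
    (PowerSeries.mk fun _ => (1 : ℚ)) * (1 - PowerSeries.X) = 1 := by
  ext n
  rw [mul_sub, mul_one, map_sub, mul_comm]
  cases n with
  | zero => simp
  | succ n => simp [PowerSeries.coeff_succ_X_mul, PowerSeries.coeff_one, Nat.succ_ne_zero]

lemma coe_finset_prod {ι : Type*} (s : Finset ι) (f : ι → Polynomial ℚ) :
    ((∏ i ∈ s, f i : Polynomial ℚ) : PowerSeries ℚ) = ∏ i ∈ s, ((f i : Polynomial ℚ) : PowerSeries ℚ) := by
  rw [← Polynomial.coeToPowerSeries.ringHom_apply, map_prod]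
  simp

lemma coe_finset_sum {ι : Type*} (s : Finset ι) (f : ι → Polynomial ℚ) :
    ((∑ i ∈ s, f i : Polynomial ℚ) : PowerSeries ℚ) = ∑ i ∈ s, ((f i : Polynomial ℚ) : PowerSeries ℚ) := by
  rw [← Polynomial.coeToPowerSeries.ringHom_apply, map_sum]
  simp

lemma coe_sub' (p q : Polynomial ℚ) :
    ((p - q : Polynomial ℚ) : PowerSeries ℚ) = (p : PowerSeries ℚ) - (q : PowerSeries ℚ) := by
  rw [← Polynomial.coeToPowerSeries.ringHom_apply, map_sub]
  simp

/-- For `S = ⟨d₁,…,d_m⟩` the alternating power sum of syzygy degrees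
satisfies `ℂ_m(S) = (−1)^m · m! · π_m · K₀` with `K₀ = G₀ + δ₁`, `δ₁ = (σ₁ − 1)/2`.
Here `ℂ_n(S) = −∑_{s≥1} q_s s^n` where `Q(S;z) = ∑_s q_s z^s` is the Hilbert numerator. -/
theorem alternating_power_sum_degree_m
    (m : ℕ) (d : Fin m → ℕ) (hd : ∀ j, 0 < d j)
    (hgcd : Finset.univ.gcd d = 1)
    (S : Set ℕ) (hS : S = {n : ℕ | ∃ a : Fin m → ℕ, n = ∑ j, a j * d j})
    (Δ : Set ℕ) (hΔ : Δ = {n : ℕ | 0 < n ∧ n ∉ S})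
    (hfin : Δ.Finite)
    (H : PowerSeries ℚ)
    (hH : H = PowerSeries.mk (Set.indicator S (fun _ => (1 : ℚ))))
    (Q : Polynomial ℚ)
    (hQ : (Q : PowerSeries ℚ)
      = H * ∏ j, (1 - (PowerSeries.X : PowerSeries ℚ) ^ (d j)))
    (CC : ℕ → ℚ)
    (hCC : ∀ n : ℕ, CC n
      = -∑ s ∈ Q.support.filter (fun s => 1 ≤ s), Q.coeff s * (s : ℚ) ^ n) :
    CC m = (-1 : ℚ) ^ m * (Nat.factorial m) * (∏ j, (d j : ℚ))
      * ((hfin.toFinset.card : ℚ) + ((∑ j, (d j : ℚ)) - 1) / 2) := by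
  classical
  -- m is positive
  have hm : 0 < m := by
    rcases Nat.eq_zero_or_pos m with h | h
    · subst h
      simp [Finset.univ_eq_empty] at hgcd
    · exact h
  set i0 : Fin m := ⟨0, hm⟩ with hi0
  have hmem : i0 ∈ (Finset.univ : Finset (Fin m)) := Finset.mem_univ _
  set u0 : Finset (Fin m) := Finset.univ.erase i0 with hu0
  have hcard0 : u0.card = m - 1 := by
    rw [hu0, Finset.card_erase_of_mem hmem, Finset.card_univ, Fintype.card_fin]
  set t := hfin.toFinset with ht
  set F : Polynomial ℚ := ∑ g ∈ t, Polynomial.X ^ g with hF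
  have hFcoeff : ∀ n, F.coeff n = if n ∈ t then 1 else 0 := by
    intro n
    rw [hF, Polynomial.finset_sum_coeff]
    simp only [Polynomial.coeff_X_pow]
    simp
  have h0S : (0 : ℕ) ∈ S := by
    rw [hS]; exact ⟨fun _ => 0, by simp⟩
  -- H = mk 1 - F
  have hHser : H = (PowerSeries.mk fun _ => (1 : ℚ)) - (F : PowerSeries ℚ) := by
    ext n
    rw [hH, map_sub, PowerSeries.coeff_mk, PowerSeries.coeff_mk,
      Polynomial.coeff_coe, hFcoeff]
    by_cases hn : n ∈ S
    · have hnt : n ∉ t := by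
        rw [ht, Set.Finite.mem_toFinset, hΔ]
        simp [hn]
      simp [Set.indicator_of_mem hn, hnt]
    · have hn0 : 0 < n := Nat.pos_of_ne_zero (by rintro rfl; exact hn h0S)
      have hnt : n ∈ t := by
        rw [ht, Set.Finite.mem_toFinset, hΔ]
        exact ⟨hn0, hn⟩
      simp [Set.indicator_of_notMem hn, hnt]
  set D0 : ℕ := d i0 with hD0
  set geom : Polynomial ℚ := ∑ i ∈ Finset.range D0, Polynomial.X ^ i with hg
  -- mk1 * (1 - X^D0) = geom
  have hgeomPS : (PowerSeries.mk fun _ => (1 : ℚ)) * (1 - PowerSeries.X ^ D0)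
      = (geom : PowerSeries ℚ) := by
    have h1 : (1 - PowerSeries.X ^ D0 : PowerSeries ℚ)
        = (geom : PowerSeries ℚ) * (1 - PowerSeries.X) := by
      have h2 := geom_sum_mul (PowerSeries.X : PowerSeries ℚ) D0
      have h3 : (geom : PowerSeries ℚ) = ∑ i ∈ Finset.range D0, (PowerSeries.X : PowerSeries ℚ) ^ i := by
        rw [hg, coe_finset_sum]
        simp
      rw [h3]
      linear_combination h2
    rw [h1, show ((PowerSeries.mk fun _ => (1:ℚ))) * ((geom : PowerSeries ℚ) * (1 - PowerSeries.X))
        = (geom : PowerSeries ℚ) * ((PowerSeries.mk fun _ => (1:ℚ)) * (1 - PowerSeries.X)) from by ring,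
      one_ser_mul, mul_one]
  -- polynomial identity for Q
  have hQpoly : Q = geom * (∏ j ∈ u0, (1 - Polynomial.X ^ d j))
      - F * ∏ j, (1 - Polynomial.X ^ d j) := by
    have hsplit : (∏ j, (1 - (PowerSeries.X : PowerSeries ℚ) ^ d j))
        = (1 - PowerSeries.X ^ D0) * ∏ j ∈ u0, (1 - PowerSeries.X ^ d j) := by
      rw [← Finset.mul_prod_erase _ _ hmem, ← hu0, ← hD0]
    apply Polynomial.coe_inj.mp
    rw [hQ, hHser]
    rw [coe_sub', Polynomial.coe_mul, Polynomial.coe_mul, coe_finset_prod, coe_finset_prod]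
    simp only [coe_sub', Polynomial.coe_one, Polynomial.coe_pow, Polynomial.coe_X, hsplit]
    rw [← hgeomPS]
    ring
  -- images under aeval exp
  have haev : ∀ dd : ℕ, Polynomial.aeval (PowerSeries.exp ℚ) ((1 : Polynomial ℚ) - Polynomial.X ^ dd)
      = PowerSeries.X * hser dd := by
    intro dd
    rw [map_sub, map_one, map_pow, Polynomial.aeval_X, PowerSeries.exp_pow_eq_rescale_exp,
      one_sub_rescale_exp]
  have hTF : Polynomial.aeval (PowerSeries.exp ℚ) F
      = ∑ g ∈ t, rescale (g : ℚ) (PowerSeries.exp ℚ) := by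
    rw [hF, map_sum]
    simp [PowerSeries.exp_pow_eq_rescale_exp]
  have hTgeom : Polynomial.aeval (PowerSeries.exp ℚ) geom
      = ∑ i ∈ Finset.range D0, rescale (i : ℚ) (PowerSeries.exp ℚ) := by
    rw [hg, map_sum]
    simp [PowerSeries.exp_pow_eq_rescale_exp]
  have hprod_univ : ∏ j, (PowerSeries.X * hser (d j))
      = PowerSeries.X ^ m * ∏ j, hser (d j) := by
    rw [Finset.prod_mul_distrib, Finset.prod_const, Finset.card_univ, Fintype.card_fin]
  have hprod_u0 : ∏ j ∈ u0, (PowerSeries.X * hser (d j))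
      = PowerSeries.X ^ (m - 1) * ∏ j ∈ u0, hser (d j) := by
    rw [Finset.prod_mul_distrib, Finset.prod_const, hcard0]
  have hTQ : Polynomial.aeval (PowerSeries.exp ℚ) Q
      = (∑ i ∈ Finset.range D0, rescale (i : ℚ) (PowerSeries.exp ℚ))
          * (PowerSeries.X ^ (m - 1) * ∏ j ∈ u0, hser (d j))
        - (∑ g ∈ t, rescale (g : ℚ) (PowerSeries.exp ℚ))
          * (PowerSeries.X ^ m * ∏ j, hser (d j)) := by
    rw [hQpoly, map_sub, map_mul, map_mul, map_prod, map_prod]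
    simp only [haev]
    rw [hprod_univ, hprod_u0, hTF, hTgeom]
  -- CC m in terms of the coefficient of the transformed series
  have hsupp : CC m = -((m.factorial : ℚ)
      * PowerSeries.coeff m (Polynomial.aeval (PowerSeries.exp ℚ) Q)) := by
    rw [hCC m, coeff_aeval_exp,
      Finset.sum_filter_of_ne (fun s _ hne => by
        by_contra hs1
        apply hne
        have hs0 : s = 0 := by omega
        subst hs0
        simp [zero_pow hm.ne'])]
    have hfac : ((m.factorial : ℚ)) ≠ 0 := by
      exact_mod_cast m.factorial_ne_zero
    field_simp
  -- the two coefficients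
  set Pd : ℚ := ∏ j ∈ u0, (d j : ℚ) with hPd
  set Sd : ℚ := ∑ j ∈ u0, (d j : ℚ) with hSd
  set b1 : ℚ := ∑ i ∈ Finset.range D0, (i : ℚ) with hb1def
  have hconst_rescale : ∀ a : ℚ, PowerSeries.constantCoeff (rescale a (PowerSeries.exp ℚ)) = 1 := by
    intro a
    simp [← PowerSeries.coeff_zero_eq_constantCoeff, PowerSeries.coeff_rescale,
      PowerSeries.coeff_exp]
  have hPneg : ∏ j ∈ u0, (-(d j : ℚ)) = (-1) ^ (m - 1) * Pd := by
    rw [hPd, show (fun j => -(d j : ℚ)) = fun j => (-1) * (d j : ℚ) from by funext j; ring]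
    rw [Finset.prod_mul_distrib, Finset.prod_const, hcard0]
  have hPnegU : ∏ j, (-(d j : ℚ)) = (-1) ^ m * ∏ j, (d j : ℚ) := by
    rw [show (fun j => -(d j : ℚ)) = fun j => (-1) * (d j : ℚ) from by funext j; ring]
    rw [Finset.prod_mul_distrib, Finset.prod_const, Finset.card_univ, Fintype.card_fin]
  have hc2 : PowerSeries.coeff m ((∑ g ∈ t, rescale (g : ℚ) (PowerSeries.exp ℚ))
        * (PowerSeries.X ^ m * ∏ j, hser (d j)))
      = (t.card : ℚ) * ((-1) ^ m * ∏ j, (d j : ℚ)) := by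
    rw [show (∑ g ∈ t, rescale (g : ℚ) (PowerSeries.exp ℚ)) * (PowerSeries.X ^ m * ∏ j, hser (d j))
        = PowerSeries.X ^ m * ((∑ g ∈ t, rescale (g : ℚ) (PowerSeries.exp ℚ)) * ∏ j, hser (d j)) from by
        ring]
    rw [PowerSeries.coeff_X_pow_mul', if_pos le_rfl, Nat.sub_self,
      PowerSeries.coeff_zero_eq_constantCoeff, map_mul, map_sum, map_prod]
    simp only [hconst_rescale, hser_coeff0]
    rw [Finset.sum_const, hPnegU]
    simp [mul_comm]
  have hcB1 : PowerSeries.coeff 1 (∏ j ∈ u0, hser (d j))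
      = Sd * ((-1) ^ (m - 1) * Pd) / 2 := by
    rw [coeff_one_prod]
    have hterm : ∀ k ∈ u0, PowerSeries.coeff 1 (hser (d k))
        * ∏ j ∈ u0.erase k, PowerSeries.constantCoeff (hser (d j))
        = (d k : ℚ) * ((-1) ^ (m - 1) * Pd) / 2 := by
      intro k hk
      have hP := Finset.mul_prod_erase u0 (fun j => -(d j : ℚ)) hk
      rw [hPneg] at hP
      simp only [hser_coeff0, hser_coeff1]
      linear_combination ((d k : ℚ) / 2) * hP
    rw [Finset.sum_congr rfl hterm, ← Finset.sum_div, ← Finset.sum_mul, hSd]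
  have hc1 : PowerSeries.coeff m ((∑ i ∈ Finset.range D0, rescale (i : ℚ) (PowerSeries.exp ℚ))
        * (PowerSeries.X ^ (m - 1) * ∏ j ∈ u0, hser (d j)))
      = b1 * ((-1) ^ (m - 1) * Pd) + (Sd * ((-1) ^ (m - 1) * Pd) / 2) * (D0 : ℚ) := by
    rw [show (∑ i ∈ Finset.range D0, rescale (i : ℚ) (PowerSeries.exp ℚ))
          * (PowerSeries.X ^ (m - 1) * ∏ j ∈ u0, hser (d j))
        = PowerSeries.X ^ (m - 1)
          * ((∑ i ∈ Finset.range D0, rescale (i : ℚ) (PowerSeries.exp ℚ)) * ∏ j ∈ u0, hser (d j)) from by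
        ring]
    have hA1 : PowerSeries.coeff 1 (∑ i ∈ Finset.range D0, rescale (i : ℚ) (PowerSeries.exp ℚ)) = b1 := by
      rw [map_sum, hb1def]
      apply Finset.sum_congr rfl
      intro i _
      simp [PowerSeries.coeff_rescale, PowerSeries.coeff_exp]
    have hB0 : PowerSeries.constantCoeff (∏ j ∈ u0, hser (d j)) = (-1) ^ (m - 1) * Pd := by
      rw [map_prod]
      simp only [hser_coeff0]
      rw [hPneg]
    have hA0 : PowerSeries.constantCoeff (∑ i ∈ Finset.range D0, rescale (i : ℚ) (PowerSeries.exp ℚ)) = (D0 : ℚ) := by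
      rw [map_sum]
      simp only [hconst_rescale]
      rw [Finset.sum_const, Finset.card_range]
      simp
    rw [PowerSeries.coeff_X_pow_mul', if_pos (by omega), show m - (m - 1) = 1 from by omega,
      PowerSeries.coeff_one_mul, hcB1, hA1, hB0, hA0]
  -- Gauss sum
  have hb1 : b1 * 2 = (D0 : ℚ) ^ 2 - (D0 : ℚ) := by
    have hD1 : 1 ≤ D0 := hd i0
    have h3 := congrArg (fun n : ℕ => (n : ℚ)) (Finset.sum_range_id_mul_two D0)
    push_cast [Nat.cast_sub hD1] at h3
    rw [hb1def]
    linear_combination h3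
  -- put everything together
  have hPU : (∏ j, (d j : ℚ)) = (D0 : ℚ) * Pd := by
    rw [hPd, ← Finset.mul_prod_erase _ _ hmem, ← hu0, ← hD0]
  have hSU : (∑ j, (d j : ℚ)) = (D0 : ℚ) + Sd := by
    rw [hSd, ← Finset.add_sum_erase _ _ hmem, ← hu0, ← hD0]
  have hεm : ((-1 : ℚ)) ^ m = -(-1 : ℚ) ^ (m - 1) := by
    conv_lhs => rw [show m = (m - 1) + 1 from by omega]
    rw [pow_succ]
    ring
  rw [hsupp, hTQ, map_sub, hc1, hc2, hPU, hSU, hεm]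
  linear_combination (-(m.factorial : ℚ) * (-1 : ℚ) ^ (m - 1) * Pd / 2) * hb1
end

section
/- Let S = ⟨d_1,…,d_m⟩ be a numerical semigroup. Then ℂ_{m+1}(S) = (−1)^m · (m+1)! · π_m · K_1, where K_1 = G_1 + (σ_1/2)·G_0 + (3δ_1² + δ_2)/6, with δ_p = (σ_p − 1)/2^p. -/
open Polynomial PowerSeries Finset



lemma coeff0_mul (f g : PowerSeries ℚ) :
    PowerSeries.coeff 0 (f * g) = PowerSeries.coeff 0 f * PowerSeries.coeff 0 g := by
  simp [PowerSeries.coeff_mul]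

lemma coeff1_mul (f g : PowerSeries ℚ) :
    PowerSeries.coeff 1 (f * g) =
      PowerSeries.coeff 0 f * PowerSeries.coeff 1 g
      + PowerSeries.coeff 1 f * PowerSeries.coeff 0 g := by
  rw [PowerSeries.coeff_mul, Finset.Nat.sum_antidiagonal_eq_sum_range_succ_mk]
  simp [Finset.sum_range_succ]

lemma coeff2_mul (f g : PowerSeries ℚ) :
    PowerSeries.coeff 2 (f * g) =
      PowerSeries.coeff 0 f * PowerSeries.coeff 2 g
      + PowerSeries.coeff 1 f * PowerSeries.coeff 1 g
      + PowerSeries.coeff 2 f * PowerSeries.coeff 0 g := by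
  rw [PowerSeries.coeff_mul, Finset.Nat.sum_antidiagonal_eq_sum_range_succ_mk]
  simp [Finset.sum_range_succ]

lemma prod_c0 {ι : Type*} (s : Finset ι) (g : ι → PowerSeries ℚ)
    (h : ∀ i ∈ s, PowerSeries.coeff 0 (g i) = 1) :
    PowerSeries.coeff 0 (∏ i ∈ s, g i) = 1 := by
  induction s using Finset.cons_induction with
  | empty => simp
  | cons a t ha ih =>
    rw [Finset.prod_cons, coeff0_mul, h a (Finset.mem_cons_self a t),
      ih fun i hi => h i (Finset.mem_cons_of_mem hi), one_mul]

lemma prod_c1 {ι : Type*} (s : Finset ι) (g : ι → PowerSeries ℚ)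
    (h : ∀ i ∈ s, PowerSeries.coeff 0 (g i) = 1) :
    PowerSeries.coeff 1 (∏ i ∈ s, g i) = ∑ i ∈ s, PowerSeries.coeff 1 (g i) := by
  induction s using Finset.cons_induction with
  | empty => simp
  | cons a t ha ih =>
    rw [Finset.prod_cons, coeff1_mul, h a (Finset.mem_cons_self a t),
      ih fun i hi => h i (Finset.mem_cons_of_mem hi),
      prod_c0 t g fun i hi => h i (Finset.mem_cons_of_mem hi), Finset.sum_cons]
    ring

lemma prod_c2 {ι : Type*} (s : Finset ι) (g : ι → PowerSeries ℚ)
    (h : ∀ i ∈ s, PowerSeries.coeff 0 (g i) = 1) :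
    PowerSeries.coeff 2 (∏ i ∈ s, g i) =
      (∑ i ∈ s, PowerSeries.coeff 2 (g i))
      + ((∑ i ∈ s, PowerSeries.coeff 1 (g i)) ^ 2
          - ∑ i ∈ s, (PowerSeries.coeff 1 (g i)) ^ 2) / 2 := by
  induction s using Finset.cons_induction with
  | empty => simp
  | cons a t ha ih =>
    have h' : ∀ i ∈ t, PowerSeries.coeff 0 (g i) = 1 :=
      fun i hi => h i (Finset.mem_cons_of_mem hi)
    rw [Finset.prod_cons, coeff2_mul, h a (Finset.mem_cons_self a t),
      ih h', prod_c0 t g h', prod_c1 t g h', Finset.sum_cons, Finset.sum_cons,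
      Finset.sum_cons]
    ring
noncomputable def EE : PowerSeries ℚ := PowerSeries.mk fun n => 1 / (n + 1).factorial

noncomputable def FF (c : ℕ) : PowerSeries ℚ :=
  PowerSeries.C (-(c : ℚ)) * PowerSeries.rescale (c : ℚ) EE

lemma coeff_FF (c n : ℕ) :
    PowerSeries.coeff n (FF c) = -((c : ℚ) ^ (n + 1) / (n + 1).factorial) := by
  rw [FF, PowerSeries.coeff_C_mul, PowerSeries.coeff_rescale]
  simp [EE, PowerSeries.coeff_mk, pow_succ]
  ring

lemma one_sub_exp_pow (c : ℕ) :
    (1 : PowerSeries ℚ) - PowerSeries.exp ℚ ^ c = PowerSeries.X * FF c := by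
  rw [PowerSeries.exp_pow_eq_rescale_exp]
  ext n
  cases n with
  | zero =>
    rw [map_sub, PowerSeries.coeff_zero_eq_constantCoeff, map_mul]
    simp [← PowerSeries.coeff_zero_eq_constantCoeff, PowerSeries.coeff_rescale,
      PowerSeries.coeff_exp]
  | succ n =>
    rw [PowerSeries.coeff_succ_X_mul, coeff_FF, map_sub, PowerSeries.coeff_rescale,
      PowerSeries.coeff_exp]
    have h1 : ((n.factorial : ℚ)) ≠ 0 := Nat.cast_ne_zero.mpr n.factorial_ne_zero
    have h2 : ((1 : ℚ) + n) ≠ 0 := by positivity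
    simp [Nat.factorial_succ]
    rw [div_eq_mul_inv, mul_inv]
    ring

lemma EE_mul_bernoulli : EE * bernoulliPowerSeries ℚ = 1 := by
  have h := bernoulliPowerSeries_mul_exp_sub_one ℚ
  have hx : PowerSeries.exp ℚ - 1 = PowerSeries.X * EE := by
    have h1 := one_sub_exp_pow 1
    rw [pow_one] at h1
    have : FF 1 = -EE := by
      rw [FF]
      simp [PowerSeries.rescale_one]
    rw [this] at h1
    linear_combination -h1
  rw [hx] at h
  have : PowerSeries.X * (EE * bernoulliPowerSeries ℚ) = PowerSeries.X * 1 := by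
    rw [mul_one]; linear_combination h
  exact mul_left_cancel₀ PowerSeries.X_ne_zero this


/-- `ℂ_{m+1}(S) = (−1)^m (m+1)! π_m K₁` with
`K₁ = G₁ + (σ₁/2)G₀ + (3δ₁² + δ₂)/6`, `δ_p = (σ_p − 1)/2^p`. -/
theorem alternating_power_sum_degree_m_add_one
    (m : ℕ) (d : Fin m → ℕ) (hd : ∀ j, 0 < d j)
    (hgcd : Finset.univ.gcd d = 1)
    (S : Set ℕ) (hS : S = {n : ℕ | ∃ a : Fin m → ℕ, n = ∑ j, a j * d j})
    (Δ : Set ℕ) (hΔ : Δ = {n : ℕ | 0 < n ∧ n ∉ S})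
    (hfin : Δ.Finite)
    (H : PowerSeries ℚ)
    (hH : H = PowerSeries.mk (Set.indicator S (fun _ => (1 : ℚ))))
    (Q : Polynomial ℚ)
    (hQ : (Q : PowerSeries ℚ)
      = H * ∏ j, (1 - (PowerSeries.X : PowerSeries ℚ) ^ (d j)))
    (CC : ℕ → ℚ)
    (hCC : ∀ n : ℕ, CC n
      = -∑ s ∈ Q.support.filter (fun s => 1 ≤ s), Q.coeff s * (s : ℚ) ^ n)
    (σ1 σ2 δ1 δ2 G0 G1 : ℚ)
    (hσ1 : σ1 = ∑ j, (d j : ℚ)) (hσ2 : σ2 = ∑ j, (d j : ℚ) ^ 2)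
    (hδ1 : δ1 = (σ1 - 1) / 2) (hδ2 : δ2 = (σ2 - 1) / 4)
    (hG0 : G0 = (hfin.toFinset.card : ℚ))
    (hG1 : G1 = ∑ s ∈ hfin.toFinset, (s : ℚ)) :
    CC (m + 1) = (-1 : ℚ) ^ m * (Nat.factorial (m + 1)) * (∏ j, (d j : ℚ))
      * (G1 + σ1 / 2 * G0 + (3 * δ1 ^ 2 + δ2) / 6) := by
  classical
  obtain _ | m' := m
  · exfalso
    rw [Finset.univ_eq_empty, Finset.gcd_empty] at hgcd
    exact zero_ne_one hgcd
  set T : Finset ℕ := hfin.toFinset with hT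
  have h0S : (0 : ℕ) ∈ S := by rw [hS]; exact ⟨fun _ => 0, by simp⟩
  have hmemT : ∀ n, n ∈ T ↔ (0 < n ∧ n ∉ S) := by
    intro n; rw [hT, Set.Finite.mem_toFinset, hΔ]; rfl
  have hind : ∀ k, Set.indicator S (fun _ => (1 : ℚ)) k
      = 1 - (if k ∈ T then (1 : ℚ) else 0) := by
    intro k
    by_cases hk : k ∈ S
    · rw [Set.indicator_of_mem hk, if_neg (by rw [hmemT]; tauto)]; ring
    · rw [Set.indicator_of_notMem hk, if_pos]
      · ring
      · rw [hmemT]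
        exact ⟨Nat.pos_of_ne_zero (fun h => hk (h ▸ h0S)), hk⟩
  set P : Polynomial ℚ :=
    Polynomial.C 1 + ∑ s ∈ T, (Polynomial.X ^ (s + 1) - Polynomial.X ^ s) with hPdef
  have hP : (1 - PowerSeries.X) * H = (P : PowerSeries ℚ) := by
    ext n
    rw [Polynomial.coeff_coe, hPdef]
    rw [Polynomial.coeff_add, Polynomial.coeff_C, Polynomial.finset_sum_coeff]
    simp only [Polynomial.coeff_sub, Polynomial.coeff_X_pow]
    rw [sub_mul, one_mul, map_sub, hH, PowerSeries.coeff_mk]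
    cases n with
    | zero =>
      rw [hind 0]
      have hX : PowerSeries.coeff 0 (PowerSeries.X * PowerSeries.mk
          (Set.indicator S (fun _ => (1 : ℚ)))) = 0 := by
        simp
      rw [hX]
      have : ∀ s ∈ T, ((if 0 = s + 1 then (1:ℚ) else 0) - (if 0 = s then 1 else 0))
          = -(if 0 = s then (1:ℚ) else 0) := by
        intro s _; rw [if_neg (by omega)]; ring
      rw [Finset.sum_congr rfl this, Finset.sum_neg_distrib,
        Finset.sum_ite_eq T 0 (fun _ => (1:ℚ))]
      simp [hmemT]
    | succ n =>
      rw [PowerSeries.coeff_succ_X_mul, PowerSeries.coeff_mk, hind, hind]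
      have : ∀ s ∈ T, ((if n + 1 = s + 1 then (1:ℚ) else 0) - (if n + 1 = s then 1 else 0))
          = (if n = s then (1:ℚ) else 0) - (if n + 1 = s then 1 else 0) := by
        intro s _
        congr 2
        simp [Nat.add_right_cancel_iff]
      rw [Finset.sum_congr rfl this, Finset.sum_sub_distrib,
        Finset.sum_ite_eq T n (fun _ => (1:ℚ)), Finset.sum_ite_eq T (n+1) (fun _ => (1:ℚ))]
      simp
  have hcoeprod : ((∏ j, ((1 : Polynomial ℚ) - Polynomial.X ^ (d j)) : Polynomial ℚ) : PowerSeries ℚ)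
      = ∏ j, ((1 : PowerSeries ℚ) - PowerSeries.X ^ (d j)) := by
    rw [← Polynomial.coeToPowerSeries.ringHom_apply, map_prod]
    apply Finset.prod_congr rfl
    intro j _
    rw [Polynomial.coeToPowerSeries.ringHom_apply, Polynomial.coe_sub, Polynomial.coe_pow,
      Polynomial.coe_X, Polynomial.coe_one]
  have hQP : Q * (1 - Polynomial.X) = P * ∏ j, ((1 : Polynomial ℚ) - Polynomial.X ^ (d j)) := by
    rw [← Polynomial.coe_inj, Polynomial.coe_mul, Polynomial.coe_mul, hcoeprod,
      Polynomial.coe_sub, Polynomial.coe_one, Polynomial.coe_X, hQ, ← hP]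
    ring
  set A := Polynomial.aeval (PowerSeries.exp ℚ) Q with hAdef
  set B := Polynomial.aeval (PowerSeries.exp ℚ) P with hBdef
  have hAB : A * (1 - PowerSeries.exp ℚ) = B * ∏ j, (1 - PowerSeries.exp ℚ ^ (d j)) := by
    have h := congrArg (Polynomial.aeval (PowerSeries.exp ℚ)) hQP
    simpa [map_mul, map_sub, map_one, map_prod, map_pow, Polynomial.aeval_X] using h
  have hcancel : A * FF 1 = PowerSeries.X ^ m' * (B * ∏ j, FF (d j)) := by
    apply mul_left_cancel₀ (PowerSeries.X_ne_zero : (PowerSeries.X : PowerSeries ℚ) ≠ 0)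
    calc PowerSeries.X * (A * FF 1) = A * (PowerSeries.X * FF 1) := by ring
      _ = A * (1 - PowerSeries.exp ℚ) := by rw [← one_sub_exp_pow, pow_one]
      _ = B * ∏ j, (1 - PowerSeries.exp ℚ ^ (d j)) := hAB
      _ = B * ∏ j, (PowerSeries.X * FF (d j)) := by simp only [one_sub_exp_pow]
      _ = B * (PowerSeries.X ^ (m' + 1) * ∏ j, FF (d j)) := by
          rw [Finset.prod_mul_distrib, Finset.prod_const, Finset.card_univ, Fintype.card_fin]
      _ = PowerSeries.X * (PowerSeries.X ^ m' * (B * ∏ j, FF (d j))) := by ring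
  have hFFinv : FF 1 * (-(bernoulliPowerSeries ℚ)) = 1 := by
    have h1 : FF 1 = -EE := by rw [FF]; simp [PowerSeries.rescale_one]
    rw [h1, neg_mul_neg, EE_mul_bernoulli]
  have hA : A = PowerSeries.X ^ m'
      * (B * (∏ j, FF (d j)) * (-(bernoulliPowerSeries ℚ))) := by
    calc A = A * (FF 1 * (-(bernoulliPowerSeries ℚ))) := by rw [hFFinv, mul_one]
      _ = (A * FF 1) * (-(bernoulliPowerSeries ℚ)) := by ring
      _ = (PowerSeries.X ^ m' * (B * ∏ j, FF (d j))) * (-(bernoulliPowerSeries ℚ)) := by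
          rw [hcancel]
      _ = _ := by ring
  have hcoA : PowerSeries.coeff (m' + 1 + 1) A
      = PowerSeries.coeff 2 (B * (∏ j, FF (d j)) * (-(bernoulliPowerSeries ℚ))) := by
    rw [hA, show m' + 1 + 1 = 2 + m' by omega, PowerSeries.coeff_X_pow_mul]
  -- coefficients of A
  have hAsum : A = ∑ s ∈ Q.support,
      PowerSeries.C (Q.coeff s) * PowerSeries.rescale (s : ℚ) (PowerSeries.exp ℚ) := by
    rw [hAdef, Polynomial.aeval_def, Polynomial.eval₂_eq_sum, Polynomial.sum_def]
    apply Finset.sum_congr rfl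
    intro s _
    rw [PowerSeries.exp_pow_eq_rescale_exp]
    rfl
  have hAco : PowerSeries.coeff (m' + 1 + 1) A
      = (∑ s ∈ Q.support, Q.coeff s * (s : ℚ) ^ (m' + 1 + 1))
        * (1 / ((m' + 1 + 1).factorial : ℚ)) := by
    rw [hAsum, map_sum, Finset.sum_mul]
    apply Finset.sum_congr rfl
    intro s _
    rw [PowerSeries.coeff_C_mul, PowerSeries.coeff_rescale, PowerSeries.coeff_exp]
    simp
    ring
  -- coefficients of B
  have hBsum : B = 1 + ∑ s ∈ T, (PowerSeries.exp ℚ ^ (s + 1) - PowerSeries.exp ℚ ^ s) := by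
    rw [hBdef, hPdef]
    simp [map_add, map_sum, map_sub, map_pow, Polynomial.aeval_X, map_one]
  have hbco : ∀ n : ℕ, PowerSeries.coeff n B
      = (if n = 0 then (1:ℚ) else 0)
        + ∑ s ∈ T, (((s:ℚ)+1) ^ n - (s:ℚ) ^ n) * (1 / (n.factorial : ℚ)) := by
    intro n
    rw [hBsum, map_add, map_sum]
    congr 1
    · simp [PowerSeries.coeff_one]
    · apply Finset.sum_congr rfl
      intro s _
      rw [map_sub, PowerSeries.exp_pow_eq_rescale_exp, PowerSeries.exp_pow_eq_rescale_exp,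
        PowerSeries.coeff_rescale, PowerSeries.coeff_rescale, PowerSeries.coeff_exp]
      push_cast
      simp
      ring
  have hb0 : PowerSeries.coeff 0 B = 1 := by
    rw [hbco]; simp
  have hb1 : PowerSeries.coeff 1 B = (T.card : ℚ) := by
    rw [hbco]
    simp
  have hb2 : PowerSeries.coeff 2 B = (∑ s ∈ T, (s:ℚ)) + (T.card : ℚ) / 2 := by
    rw [hbco]
    have : ∀ s ∈ T, (((s:ℚ)+1) ^ 2 - (s:ℚ) ^ 2) * (1 / ((2:ℕ).factorial : ℚ))
        = (s:ℚ) + 1/2 := by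
      intro s _
      norm_num [Nat.factorial]
      ring
    rw [Finset.sum_congr rfl this]
    rw [Finset.sum_add_distrib]
    simp [Finset.sum_const, nsmul_eq_mul]
    ring
  -- coefficients of the product of FF's
  set W : PowerSeries ℚ := ∏ j, PowerSeries.rescale ((d j : ℚ)) EE with hWdef
  set c : ℚ := (-1) ^ (m' + 1) * ∏ j, (d j : ℚ) with hcdef
  have hprodFF : (∏ j, FF (d j)) = PowerSeries.C c * W := by
    rw [hWdef, hcdef]
    unfold FF
    rw [Finset.prod_mul_distrib, ← map_prod]
    congr 1
    have : ∀ j ∈ (Finset.univ : Finset (Fin (m'+1))), -((d j : ℚ)) = (-1) * (d j : ℚ) := by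
      intro j _; ring
    rw [Finset.prod_congr rfl this, Finset.prod_mul_distrib, Finset.prod_const,
      Finset.card_univ, Fintype.card_fin]
  have hrc0 : ∀ j ∈ (Finset.univ : Finset (Fin (m'+1))),
      PowerSeries.coeff 0 (PowerSeries.rescale ((d j : ℚ)) EE) = 1 := by
    intro j _
    rw [PowerSeries.coeff_rescale]
    simp [EE]
  have hrc1 : ∀ j, PowerSeries.coeff 1 (PowerSeries.rescale ((d j : ℚ)) EE)
      = (d j : ℚ) / 2 := by
    intro j
    rw [PowerSeries.coeff_rescale]
    simp [EE, PowerSeries.coeff_mk]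
    norm_num [Nat.factorial]
    ring
  have hrc2 : ∀ j, PowerSeries.coeff 2 (PowerSeries.rescale ((d j : ℚ)) EE)
      = (d j : ℚ) ^ 2 / 6 := by
    intro j
    rw [PowerSeries.coeff_rescale]
    simp [EE, PowerSeries.coeff_mk]
    norm_num [Nat.factorial]
    ring
  have hw0 : PowerSeries.coeff 0 W = 1 := prod_c0 _ _ hrc0
  have hw1 : PowerSeries.coeff 1 W = (∑ j, (d j : ℚ)) / 2 := by
    rw [hWdef, prod_c1 _ _ hrc0]
    rw [Finset.sum_congr rfl fun j _ => hrc1 j, ← Finset.sum_div]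
  have hw2 : PowerSeries.coeff 2 W
      = (∑ j, (d j : ℚ) ^ 2) / 6
        + (((∑ j, (d j : ℚ)) / 2) ^ 2 - (∑ j, (d j : ℚ) ^ 2) / 4) / 2 := by
    rw [hWdef, prod_c2 _ _ hrc0]
    have e2 : (∑ j, PowerSeries.coeff 2 (PowerSeries.rescale ((d j : ℚ)) EE))
        = (∑ j, (d j : ℚ) ^ 2) / 6 := by
      rw [Finset.sum_congr rfl fun j _ => hrc2 j, ← Finset.sum_div]
    have e1 : (∑ j, PowerSeries.coeff 1 (PowerSeries.rescale ((d j : ℚ)) EE))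
        = (∑ j, (d j : ℚ)) / 2 := by
      rw [Finset.sum_congr rfl fun j _ => hrc1 j, ← Finset.sum_div]
    have e1sq : (∑ j, (PowerSeries.coeff 1 (PowerSeries.rescale ((d j : ℚ)) EE)) ^ 2)
        = (∑ j, (d j : ℚ) ^ 2) / 4 := by
      have : ∀ j ∈ (Finset.univ : Finset (Fin (m'+1))),
          (PowerSeries.coeff 1 (PowerSeries.rescale ((d j : ℚ)) EE)) ^ 2
            = (d j : ℚ) ^ 2 / 4 := by
        intro j _
        rw [hrc1 j, div_pow]
        norm_num
      rw [Finset.sum_congr rfl this, ← Finset.sum_div]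
    rw [e2, e1, e1sq]
  -- coefficients of -bernoulliPowerSeries
  have hu : ∀ n : ℕ, PowerSeries.coeff n (-(bernoulliPowerSeries ℚ))
      = -(_root_.bernoulli n / (n.factorial : ℚ)) := by
    intro n
    rw [map_neg]
    simp [bernoulliPowerSeries, PowerSeries.coeff_mk]
  have hu0 : PowerSeries.coeff 0 (-(bernoulliPowerSeries ℚ)) = -1 := by
    rw [hu]; simp
  have hu1 : PowerSeries.coeff 1 (-(bernoulliPowerSeries ℚ)) = 1/2 := by
    rw [hu]; norm_num [_root_.bernoulli_one]
  have hu2 : PowerSeries.coeff 2 (-(bernoulliPowerSeries ℚ)) = -1/12 := by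
    rw [hu]
    have : _root_.bernoulli 2 = 1/6 := by norm_num [_root_.bernoulli]
    rw [this]
    norm_num [Nat.factorial]
  -- assemble
  have hp0 : PowerSeries.coeff 0 (∏ j, FF (d j)) = c := by
    rw [hprodFF, PowerSeries.coeff_C_mul, hw0, mul_one]
  have hp1 : PowerSeries.coeff 1 (∏ j, FF (d j)) = c * ((∑ j, (d j : ℚ)) / 2) := by
    rw [hprodFF, PowerSeries.coeff_C_mul, hw1]
  have hp2 : PowerSeries.coeff 2 (∏ j, FF (d j))
      = c * ((∑ j, (d j : ℚ) ^ 2) / 6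
        + (((∑ j, (d j : ℚ)) / 2) ^ 2 - (∑ j, (d j : ℚ) ^ 2) / 4) / 2) := by
    rw [hprodFF, PowerSeries.coeff_C_mul, hw2]
  have hq0 : PowerSeries.coeff 0 (B * ∏ j, FF (d j)) = c := by
    rw [coeff0_mul, hb0, hp0, one_mul]
  have hq1 : PowerSeries.coeff 1 (B * ∏ j, FF (d j))
      = c * ((∑ j, (d j : ℚ)) / 2) + (T.card : ℚ) * c := by
    rw [coeff1_mul, hb0, hb1, hp0, hp1, one_mul]
  have hq2 : PowerSeries.coeff 2 (B * ∏ j, FF (d j))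
      = c * ((∑ j, (d j : ℚ) ^ 2) / 6
          + (((∑ j, (d j : ℚ)) / 2) ^ 2 - (∑ j, (d j : ℚ) ^ 2) / 4) / 2)
        + (T.card : ℚ) * (c * ((∑ j, (d j : ℚ)) / 2))
        + ((∑ s ∈ T, (s:ℚ)) + (T.card : ℚ) / 2) * c := by
    rw [coeff2_mul, hb0, hb1, hb2, hp0, hp1, hp2, one_mul]
  have hfinal : PowerSeries.coeff 2 ((B * ∏ j, FF (d j)) * (-(bernoulliPowerSeries ℚ)))
      = c * (-1/12)
        + (c * ((∑ j, (d j : ℚ)) / 2) + (T.card : ℚ) * c) * (1/2)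
        + (c * ((∑ j, (d j : ℚ) ^ 2) / 6
            + (((∑ j, (d j : ℚ)) / 2) ^ 2 - (∑ j, (d j : ℚ) ^ 2) / 4) / 2)
          + (T.card : ℚ) * (c * ((∑ j, (d j : ℚ)) / 2))
          + ((∑ s ∈ T, (s:ℚ)) + (T.card : ℚ) / 2) * c) * (-1) := by
    rw [coeff2_mul, hq0, hq1, hq2, hu0, hu1, hu2]
  have hfilter : ∑ s ∈ Q.support.filter (fun s => 1 ≤ s), Q.coeff s * (s : ℚ) ^ (m' + 1 + 1)
      = ∑ s ∈ Q.support, Q.coeff s * (s : ℚ) ^ (m' + 1 + 1) := by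
    apply Finset.sum_filter_of_ne
    intro x hx hfx
    rcases Nat.eq_zero_or_pos x with h0 | h1
    · exfalso; apply hfx; subst h0; simp
    · exact h1
  have hfac : (((m' + 1 + 1).factorial : ℚ)) ≠ 0 :=
    Nat.cast_ne_zero.mpr (Nat.factorial_ne_zero _)
  have hsum_eq : ∑ s ∈ Q.support, Q.coeff s * (s : ℚ) ^ (m' + 1 + 1)
      = (((m' + 1 + 1).factorial : ℚ)) * PowerSeries.coeff (m' + 1 + 1) A := by
    rw [hAco]
    field_simp
  rw [hCC, hfilter, hsum_eq, hcoA, hfinal]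
  subst hδ1 hδ2 hG0 hG1 hσ1 hσ2
  rw [hcdef]
  field_simp
  ring
end

section
/- Let S = ⟨d_1,…,d_m⟩ be a numerical semigroup. Then ℂ_{m+2}(S) = (−1)^m · ((m+2)!/2!) · π_m · K_2, where K_2 = G_2 + σ_1·G_1 + ((3σ_1² + σ_2)/12)·G_0 + δ_1(δ_1² + δ_2)/3, with δ_p = (σ_p − 1)/2^p. -/
open Polynomial PowerSeries Finset

noncomputable def vv (a : ℚ) : PowerSeries ℚ :=
  PowerSeries.mk fun k => a ^ k / (Nat.factorial (k+1))

lemma coeff_vv (a : ℚ) (k : ℕ) :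
    PowerSeries.coeff k (vv a) = a ^ k / (Nat.factorial (k+1)) := coeff_mk _ _

lemma rescale_exp_eq (a : ℚ) :
    rescale a (exp ℚ) = 1 + PowerSeries.C a * PowerSeries.X * vv a := by
  ext n
  cases n with
  | zero =>
      simp [coeff_rescale, coeff_exp, mul_assoc, coeff_zero_eq_constantCoeff, map_mul]
  | succ n =>
      rw [map_add, mul_assoc, PowerSeries.coeff_C_mul, coeff_succ_X_mul, coeff_vv,
        coeff_rescale, coeff_exp]
      simp only [PowerSeries.coeff_one, Nat.succ_ne_zero, if_false, zero_add]
      rw [Nat.factorial_succ]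
      push_cast
      rw [div_eq_mul_inv, div_eq_mul_inv, mul_inv]
      ring

lemma exp_eq : exp ℚ = 1 + PowerSeries.X * vv 1 := by
  have := rescale_exp_eq 1
  rwa [rescale_one, RingHom.id_apply, map_one, one_mul] at this

lemma constCoeff_vv (a : ℚ) : PowerSeries.constantCoeff (vv a) = 1 := by
  simp [vv]

lemma vv_mul_inv : vv 1 * (vv 1)⁻¹ = 1 :=
  PowerSeries.mul_inv_cancel _ (by rw [constCoeff_vv]; norm_num)

lemma coeff_inv_vv0 : PowerSeries.coeff 0 (vv 1)⁻¹ = 1 := by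
  rw [PowerSeries.coeff_inv]
  simp [constCoeff_vv]

lemma coeff_inv_vv1 : PowerSeries.coeff 1 (vv 1)⁻¹ = -(1/2) := by
  have h := congrArg (PowerSeries.coeff 1) vv_mul_inv
  rw [PowerSeries.coeff_mul, Finset.Nat.sum_antidiagonal_eq_sum_range_succ_mk] at h
  simp only [Finset.sum_range_succ, Finset.sum_range_zero, coeff_vv] at h
  norm_num [coeff_inv_vv0] at h
  linarith

lemma coeff_inv_vv2 : PowerSeries.coeff 2 (vv 1)⁻¹ = 1/12 := by
  have h := congrArg (PowerSeries.coeff 2) vv_mul_inv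
  rw [PowerSeries.coeff_mul, Finset.Nat.sum_antidiagonal_eq_sum_range_succ_mk] at h
  simp only [Finset.sum_range_succ, Finset.sum_range_zero, coeff_vv] at h
  norm_num [coeff_inv_vv0, coeff_inv_vv1, Nat.factorial] at h
  linarith

lemma coeff_inv_vv3 : PowerSeries.coeff 3 (vv 1)⁻¹ = 0 := by
  have h := congrArg (PowerSeries.coeff 3) vv_mul_inv
  rw [PowerSeries.coeff_mul, Finset.Nat.sum_antidiagonal_eq_sum_range_succ_mk] at h
  simp only [Finset.sum_range_succ, Finset.sum_range_zero, coeff_vv] at h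
  norm_num [coeff_inv_vv0, coeff_inv_vv1, coeff_inv_vv2, Nat.factorial] at h
  linarith

lemma coeff_prod_vv {ι : Type*} (s : Finset ι) (f : ι → ℚ) :
    PowerSeries.coeff 0 (∏ j ∈ s, vv (f j)) = 1 ∧
    PowerSeries.coeff 1 (∏ j ∈ s, vv (f j)) = (∑ j ∈ s, f j) / 2 ∧
    PowerSeries.coeff 2 (∏ j ∈ s, vv (f j))
      = (3 * (∑ j ∈ s, f j)^2 + ∑ j ∈ s, (f j)^2) / 24 ∧
    PowerSeries.coeff 3 (∏ j ∈ s, vv (f j))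
      = (∑ j ∈ s, f j) * ((∑ j ∈ s, f j)^2 + ∑ j ∈ s, (f j)^2) / 48 := by
  induction s using Finset.cons_induction with
  | empty => simp
  | cons a s ha ih =>
    obtain ⟨h0, h1, h2, h3⟩ := ih
    rw [Finset.prod_cons]
    refine ⟨?_, ?_, ?_, ?_⟩ <;>
    · rw [PowerSeries.coeff_mul, Finset.Nat.sum_antidiagonal_eq_sum_range_succ_mk]
      simp only [Finset.sum_range_succ, Finset.sum_range_zero, coeff_vv, h0, h1, h2, h3,
        Finset.sum_cons]
      norm_num [Nat.factorial]
      try ring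

lemma coeff_sum_exp_pow (t : Finset ℕ) (k : ℕ) :
    PowerSeries.coeff k (∑ s ∈ t, (exp ℚ) ^ s)
      = (∑ s ∈ t, (s:ℚ)^k) / (Nat.factorial k) := by
  rw [map_sum, Finset.sum_div]
  refine Finset.sum_congr rfl fun s _ => ?_
  rw [exp_pow_eq_rescale_exp, coeff_rescale, coeff_exp]
  simp [div_eq_mul_inv]

/-- `ℂ_{m+2}(S) = (−1)^m ((m+2)!/2!) π_m K₂` with
`K₂ = G₂ + σ₁G₁ + ((3σ₁² + σ₂)/12)G₀ + δ₁(δ₁² + δ₂)/3`, `δ_p = (σ_p − 1)/2^p`. -/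
theorem alternating_power_sum_degree_m_add_two
    (m : ℕ) (d : Fin m → ℕ) (hd : ∀ j, 0 < d j)
    (hgcd : Finset.univ.gcd d = 1)
    (S : Set ℕ) (hS : S = {n : ℕ | ∃ a : Fin m → ℕ, n = ∑ j, a j * d j})
    (Δ : Set ℕ) (hΔ : Δ = {n : ℕ | 0 < n ∧ n ∉ S})
    (hfin : Δ.Finite)
    (H : PowerSeries ℚ)
    (hH : H = PowerSeries.mk (Set.indicator S (fun _ => (1 : ℚ))))
    (Q : Polynomial ℚ)
    (hQ : (Q : PowerSeries ℚ)
      = H * ∏ j, (1 - (PowerSeries.X : PowerSeries ℚ) ^ (d j)))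
    (CC : ℕ → ℚ)
    (hCC : ∀ n : ℕ, CC n
      = -∑ s ∈ Q.support.filter (fun s => 1 ≤ s), Q.coeff s * (s : ℚ) ^ n)
    (σ1 σ2 δ1 δ2 G0 G1 G2 : ℚ)
    (hσ1 : σ1 = ∑ j, (d j : ℚ)) (hσ2 : σ2 = ∑ j, (d j : ℚ) ^ 2)
    (hδ1 : δ1 = (σ1 - 1) / 2) (hδ2 : δ2 = (σ2 - 1) / 4)
    (hG0 : G0 = (hfin.toFinset.card : ℚ))
    (hG1 : G1 = ∑ s ∈ hfin.toFinset, (s : ℚ))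
    (hG2 : G2 = ∑ s ∈ hfin.toFinset, (s : ℚ) ^ 2) :
    CC (m + 2) = (-1 : ℚ) ^ m * ((Nat.factorial (m + 2) : ℚ) / Nat.factorial 2)
      * (∏ j, (d j : ℚ))
      * (G2 + σ1 * G1 + (3 * σ1 ^ 2 + σ2) / 12 * G0 + δ1 * (δ1 ^ 2 + δ2) / 3) := by
  classical
  -- m ≥ 1
  have hm : 1 ≤ m := by
    rcases Nat.eq_zero_or_pos m with h | h
    · subst h
      rw [Finset.univ_eq_empty, Finset.gcd_empty] at hgcd
      exact absurd hgcd zero_ne_one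
    · exact h
  set Δf := hfin.toFinset with hΔf
  set gp : Polynomial ℚ := ∑ s ∈ Δf, Polynomial.X ^ s with hgp
  have hzeroS : (0:ℕ) ∈ S := by
    rw [hS]; exact ⟨fun _ => 0, by simp⟩
  have hind : ∀ n : ℕ, Set.indicator S (fun _ => (1:ℚ)) n + gp.coeff n = 1 := by
    intro n
    have hgc : gp.coeff n = if n ∈ Δf then 1 else 0 := by
      rw [hgp, Polynomial.finset_sum_coeff]
      simp only [Polynomial.coeff_X_pow]
      rw [Finset.sum_ite_eq]
    rw [hgc]
    by_cases hn : n ∈ S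
    · have h2 : n ∉ Δf := by
        rw [hΔf, Set.Finite.mem_toFinset, hΔ]
        simp [hn]
      simp [Set.indicator_of_mem hn, h2]
    · have hnpos : 0 < n := by
        rcases Nat.eq_zero_or_pos n with h | h
        · exact absurd (h ▸ hzeroS) hn
        · exact h
      have h2 : n ∈ Δf := by
        rw [hΔf, Set.Finite.mem_toFinset, hΔ]
        exact ⟨hnpos, hn⟩
      simp [Set.indicator_of_notMem hn, h2]
  -- (1 - X)(H + gp) = 1
  have h1 : ((1:PowerSeries ℚ) - PowerSeries.X) * (H + (gp : PowerSeries ℚ)) = 1 := by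
    ext n
    rw [sub_mul, one_mul, map_sub]
    cases n with
    | zero =>
        rw [coeff_zero_X_mul, map_add, Polynomial.coeff_coe, hH, coeff_mk,
          PowerSeries.coeff_one]
        simpa using hind 0
    | succ n =>
        rw [coeff_succ_X_mul, map_add, map_add, Polynomial.coeff_coe, Polynomial.coeff_coe,
          hH, coeff_mk, coeff_mk, PowerSeries.coeff_one]
        simp only [Nat.succ_ne_zero, if_false]
        linarith [hind n, hind (n+1)]
  have h2 : ((1:PowerSeries ℚ) - PowerSeries.X) * H
      = 1 - (1 - PowerSeries.X) * (gp : PowerSeries ℚ) := by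
    linear_combination h1
  have hprod_coe : ((∏ j, (1 - Polynomial.X ^ (d j)) : Polynomial ℚ) : PowerSeries ℚ)
      = ∏ j, (1 - (PowerSeries.X : PowerSeries ℚ) ^ (d j)) := by
    rw [← Polynomial.coeToPowerSeries.ringHom_apply, map_prod]
    refine Finset.prod_congr rfl fun j _ => ?_
    simp [map_sub, map_one, map_pow, Polynomial.coeToPowerSeries.ringHom_apply,
      Polynomial.coe_X]
  have hpoly : ((1:Polynomial ℚ) - Polynomial.X) * Q
      = (1 - (1 - Polynomial.X) * gp) * ∏ j, (1 - Polynomial.X ^ (d j)) := by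
    rw [← Polynomial.coe_inj]
    rw [Polynomial.coe_mul, Polynomial.coe_mul, Polynomial.coe_sub, Polynomial.coe_sub,
      Polynomial.coe_mul, Polynomial.coe_sub, Polynomial.coe_one, Polynomial.coe_X,
      hprod_coe, hQ]
    linear_combination (∏ j, (1 - (PowerSeries.X : PowerSeries ℚ) ^ (d j))) * h2
  -- apply the exponential substitution
  have hE := congrArg (Polynomial.aeval (exp ℚ)) hpoly
  simp only [map_mul, map_sub, map_one, map_prod, map_pow, Polynomial.aeval_X] at hE
  have hxe : (1:PowerSeries ℚ) - exp ℚ = -(PowerSeries.X * vv 1) := by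
    rw [exp_eq]; ring
  have hde : ∀ j, (1:PowerSeries ℚ) - exp ℚ ^ (d j)
      = -(PowerSeries.C ((d j : ℚ)) * PowerSeries.X * vv (d j)) := by
    intro j
    rw [exp_pow_eq_rescale_exp, rescale_exp_eq]; ring
  rw [hxe] at hE
  rw [Finset.prod_congr rfl fun j (_ : j ∈ Finset.univ) => hde j] at hE
  have hprod2 : (∏ j, -(PowerSeries.C ((d j : ℚ)) * PowerSeries.X * vv ((d j : ℚ))))
      = PowerSeries.C ((-1)^m * ∏ j, ((d j : ℚ)))
        * (PowerSeries.X ^ m * ∏ j, vv ((d j : ℚ))) := by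
    have e1 : ∀ j : Fin m, -(PowerSeries.C ((d j : ℚ)) * PowerSeries.X * vv ((d j : ℚ)))
        = (PowerSeries.C (-((d j : ℚ))) * PowerSeries.X) * vv ((d j : ℚ)) := by
      intro j; rw [map_neg]; ring
    rw [Finset.prod_congr rfl fun j (_ : j ∈ Finset.univ) => e1 j, Finset.prod_mul_distrib,
      Finset.prod_mul_distrib, ← map_prod, Finset.prod_const, Finset.card_univ,
      Fintype.card_fin]
    have e2 : (∏ j, -((d j : ℚ))) = (-1)^m * ∏ j, ((d j : ℚ)) := by
      rw [show (fun j : Fin m => -((d j : ℚ))) = fun j => (-1) * ((d j : ℚ)) from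
        funext fun j => by ring, Finset.prod_mul_distrib, Finset.prod_const,
        Finset.card_univ, Fintype.card_fin]
    rw [e2, map_mul]
    ring
  rw [hprod2] at hE
  set EQ := Polynomial.aeval (exp ℚ) Q with hEQdef
  set Eg := Polynomial.aeval (exp ℚ) gp with hEgdef
  set V := ∏ j, vv ((d j : ℚ)) with hVdef
  set pp := ∏ j, ((d j : ℚ)) with hppdef
  have hc : (PowerSeries.C (((-1:ℚ))^(m+1) * pp)) = -(PowerSeries.C ((-1)^m * pp)) := by
    rw [← map_neg]; congr 1; ring
  have hKey : PowerSeries.X * (vv 1 * EQ)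
      = PowerSeries.C (((-1:ℚ))^(m+1) * pp)
        * (PowerSeries.X ^ m * ((1 + PowerSeries.X * (vv 1 * Eg)) * V)) := by
    rw [hc]
    linear_combination -hE
  have hF : ∀ k : ℕ, PowerSeries.coeff k (vv 1 * EQ)
      = ((-1:ℚ))^(m+1) * pp *
        (if m ≤ k + 1 then
          PowerSeries.coeff (k+1-m) ((1 + PowerSeries.X * (vv 1 * Eg)) * V) else 0) := by
    intro k
    have h := congrArg (PowerSeries.coeff (k+1)) hKey
    rw [coeff_succ_X_mul, PowerSeries.coeff_C_mul,
      mul_comm (PowerSeries.X ^ m) _, PowerSeries.coeff_mul_X_pow'] at h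
    exact h
  -- coefficients of V
  have hVall := coeff_prod_vv (Finset.univ) (fun j : Fin m => ((d j : ℚ)))
  rw [← hVdef] at hVall
  obtain ⟨hV0, hV1, hV2, hV3⟩ := hVall
  rw [← hσ1] at hV1 hV2 hV3
  rw [← hσ2] at hV2 hV3
  -- coefficients of Eg
  have hEg : ∀ k, PowerSeries.coeff k Eg = (∑ s ∈ Δf, (s:ℚ)^k) / (Nat.factorial k) := by
    intro k
    rw [hEgdef, hgp, map_sum]
    simp only [map_pow, Polynomial.aeval_X]
    exact coeff_sum_exp_pow Δf k
  have hEg0 : PowerSeries.coeff 0 Eg = G0 := by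
    rw [hEg, hG0]
    norm_num
  have hEg1 : PowerSeries.coeff 1 Eg = G1 := by
    rw [hEg, hG1]
    norm_num
  have hEg2 : PowerSeries.coeff 2 Eg = G2 / 2 := by
    rw [hEg, hG2]
    norm_num [Nat.factorial]
  -- coefficients of vv 1 * Eg
  have hg0 : PowerSeries.coeff 0 (vv 1 * Eg) = G0 := by
    rw [PowerSeries.coeff_mul, Finset.Nat.sum_antidiagonal_eq_sum_range_succ_mk]
    simp only [Finset.sum_range_succ, Finset.sum_range_zero, coeff_vv, hEg0]
    norm_num
  have hg1 : PowerSeries.coeff 1 (vv 1 * Eg) = G0/2 + G1 := by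
    rw [PowerSeries.coeff_mul, Finset.Nat.sum_antidiagonal_eq_sum_range_succ_mk]
    simp only [Finset.sum_range_succ, Finset.sum_range_zero, coeff_vv]
    norm_num [hEg0, hEg1, Nat.factorial]
    ring
  have hg2 : PowerSeries.coeff 2 (vv 1 * Eg) = G0/6 + G1/2 + G2/2 := by
    rw [PowerSeries.coeff_mul, Finset.Nat.sum_antidiagonal_eq_sum_range_succ_mk]
    simp only [Finset.sum_range_succ, Finset.sum_range_zero, coeff_vv]
    norm_num [hEg0, hEg1, hEg2, Nat.factorial]
    ring
  -- coefficients of W = (vv 1 * Eg) * V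
  have hW0 : PowerSeries.coeff 0 ((vv 1 * Eg) * V) = G0 := by
    rw [PowerSeries.coeff_mul, Finset.Nat.sum_antidiagonal_eq_sum_range_succ_mk]
    simp only [Finset.sum_range_succ, Finset.sum_range_zero, hg0, hV0]
    norm_num
  have hW1 : PowerSeries.coeff 1 ((vv 1 * Eg) * V) = G0 * (σ1/2) + (G0/2 + G1) := by
    rw [PowerSeries.coeff_mul, Finset.Nat.sum_antidiagonal_eq_sum_range_succ_mk]
    simp only [Finset.sum_range_succ, Finset.sum_range_zero, hg0, hg1, hV0, hV1]
    norm_num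
    try ring
  have hW2 : PowerSeries.coeff 2 ((vv 1 * Eg) * V)
      = G0 * ((3*σ1^2 + σ2)/24) + (G0/2 + G1) * (σ1/2) + (G0/6 + G1/2 + G2/2) := by
    rw [PowerSeries.coeff_mul, Finset.Nat.sum_antidiagonal_eq_sum_range_succ_mk]
    simp only [Finset.sum_range_succ, Finset.sum_range_zero, hg0, hg1, hg2, hV0, hV1, hV2]
    norm_num
    try ring
  -- coefficients of Z
  have hZeq : (1 + PowerSeries.X * (vv 1 * Eg)) * V
      = V + PowerSeries.X * ((vv 1 * Eg) * V) := by ring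
  have hZ1 : PowerSeries.coeff 1 ((1 + PowerSeries.X * (vv 1 * Eg)) * V)
      = σ1/2 + G0 := by
    rw [hZeq, map_add, show (1:ℕ) = 0 + 1 from rfl, coeff_succ_X_mul, hW0]
    rw [show (0:ℕ) + 1 = 1 from rfl, hV1]
  have hZ2 : PowerSeries.coeff 2 ((1 + PowerSeries.X * (vv 1 * Eg)) * V)
      = (3*σ1^2 + σ2)/24 + (G0 * (σ1/2) + (G0/2 + G1)) := by
    rw [hZeq, map_add, show (2:ℕ) = 1 + 1 from rfl, coeff_succ_X_mul, hW1]
    rw [show (1:ℕ) + 1 = 2 from rfl, hV2]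
  have hZ3 : PowerSeries.coeff 3 ((1 + PowerSeries.X * (vv 1 * Eg)) * V)
      = σ1 * (σ1^2 + σ2)/48
        + (G0 * ((3*σ1^2 + σ2)/24) + (G0/2 + G1) * (σ1/2) + (G0/6 + G1/2 + G2/2)) := by
    rw [hZeq, map_add, show (3:ℕ) = 2 + 1 from rfl, coeff_succ_X_mul, hW2]
    rw [show (2:ℕ) + 1 = 3 from rfl, hV3]
  -- EQ = (vv 1)⁻¹ * (vv 1 * EQ)
  have hinv : (vv 1)⁻¹ * vv 1 = 1 := by rw [mul_comm]; exact vv_mul_inv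
  have hEQdecomp : EQ = (vv 1)⁻¹ * (vv 1 * EQ) := by
    rw [← mul_assoc, hinv, one_mul]
  have hconv : PowerSeries.coeff (m+2) EQ
      = ∑ k ∈ Finset.range (m+3),
          PowerSeries.coeff k (vv 1)⁻¹ * PowerSeries.coeff (m+2-k) (vv 1 * EQ) := by
    conv_lhs => rw [hEQdecomp]
    rw [PowerSeries.coeff_mul, Finset.Nat.sum_antidiagonal_eq_sum_range_succ_mk]
  have hsmall : ∑ k ∈ Finset.range (m+3),
        PowerSeries.coeff k (vv 1)⁻¹ * PowerSeries.coeff (m+2-k) (vv 1 * EQ)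
      = ∑ k ∈ Finset.range 4,
        PowerSeries.coeff k (vv 1)⁻¹ * PowerSeries.coeff (m+2-k) (vv 1 * EQ) := by
    refine (Finset.sum_subset (Finset.range_subset_range.2 (by omega)) ?_).symm
    intro k hk hk4
    rw [Finset.mem_range] at hk hk4
    rw [hF, if_neg (by omega), mul_zero, mul_zero]
  have hFa : PowerSeries.coeff (m+2) (vv 1 * EQ)
      = ((-1:ℚ))^(m+1) * pp
        * PowerSeries.coeff 3 ((1 + PowerSeries.X * (vv 1 * Eg)) * V) := by
    rw [hF, if_pos (by omega), show m + 2 + 1 - m = 3 from by omega]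
  have hFb : PowerSeries.coeff (m+1) (vv 1 * EQ)
      = ((-1:ℚ))^(m+1) * pp
        * PowerSeries.coeff 2 ((1 + PowerSeries.X * (vv 1 * Eg)) * V) := by
    rw [hF, if_pos (by omega), show m + 1 + 1 - m = 2 from by omega]
  have hFc : PowerSeries.coeff m (vv 1 * EQ)
      = ((-1:ℚ))^(m+1) * pp
        * PowerSeries.coeff 1 ((1 + PowerSeries.X * (vv 1 * Eg)) * V) := by
    rw [hF, if_pos (by omega), show m + 1 - m = 1 from by omega]
  have hcoeffEQ : PowerSeries.coeff (m+2) EQ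
      = ((-1:ℚ))^(m+1) * pp *
        ((σ1 * (σ1^2 + σ2)/48
            + (G0 * ((3*σ1^2 + σ2)/24) + (G0/2 + G1) * (σ1/2) + (G0/6 + G1/2 + G2/2)))
          - (1/2) * ((3*σ1^2 + σ2)/24 + (G0 * (σ1/2) + (G0/2 + G1)))
          + (1/12) * (σ1/2 + G0)) := by
    rw [hconv, hsmall, Finset.sum_range_succ, Finset.sum_range_succ, Finset.sum_range_succ,
      Finset.sum_range_succ, Finset.sum_range_zero]
    rw [show m + 2 - 1 = m + 1 from by omega, show m + 2 - 2 = m from by omega,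
      Nat.sub_zero]
    rw [coeff_inv_vv0, coeff_inv_vv1, coeff_inv_vv2, coeff_inv_vv3, hFa, hFb, hFc,
      hZ1, hZ2, hZ3]
    ring
  -- CC in terms of the coefficient
  have hsupp : ∑ s ∈ Q.support.filter (fun s => 1 ≤ s), Q.coeff s * (s:ℚ)^(m+2)
      = ∑ s ∈ Q.support, Q.coeff s * (s:ℚ)^(m+2) := by
    refine Finset.sum_filter_of_ne ?_
    intro x hx hne
    rcases Nat.eq_zero_or_pos x with h | h
    · subst h
      simp [zero_pow] at hne
    · exact h
  have halg : ∀ a : ℚ, algebraMap ℚ (PowerSeries ℚ) a = PowerSeries.C a := fun _ => rfl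
  have hcoeffsum : PowerSeries.coeff (m+2) EQ
      = (∑ s ∈ Q.support, Q.coeff s * (s:ℚ)^(m+2)) / (Nat.factorial (m+2)) := by
    rw [hEQdef, Polynomial.aeval_def, Polynomial.eval₂_eq_sum, Polynomial.sum_def,
      map_sum, Finset.sum_div]
    refine Finset.sum_congr rfl fun s _ => ?_
    rw [halg, PowerSeries.coeff_C_mul, exp_pow_eq_rescale_exp, coeff_rescale, coeff_exp]
    simp only [Algebra.algebraMap_self, RingHom.id_apply]
    rw [div_eq_mul_inv]
    ring
  have hfactne : ((Nat.factorial (m+2) : ℕ) : ℚ) ≠ 0 := by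
    exact_mod_cast Nat.factorial_ne_zero (m+2)
  have hCCval : CC (m+2) = -(((Nat.factorial (m+2) : ℕ) : ℚ) * PowerSeries.coeff (m+2) EQ) := by
    rw [hCC (m+2), hsupp, hcoeffsum]
    field_simp
  rw [hCCval, hcoeffEQ, hδ1, hδ2]
  rw [show ((Nat.factorial 2 : ℕ) : ℚ) = 2 from by norm_num [Nat.factorial]]
  rw [pow_succ]
  field_simp
  ring
end

section
/- Let S be a symmetric numerical semigroup with Frobenius number F and genera G_k = ∑_{s∈Δ} s^k. Then for every integer r ≥ 1, in ℚ: 2·G_{2r} + ∑_{q=1}^{2r} (−1)^q · binom(2r, q) · F^q · G_{2r−q} = F^{2r+1}/(2r+1) + F^{2r}/2 + ∑_{q=1}^{2r−1} binom(2r, q−1) · B_{2r−q+1} · F^q / q, where B_k denotes the k-th Bernoulli number (only indices k ≥ 2 occur, so the convention for B_1 is immaterial). -/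
open Finset

/-- For a symmetric numerical semigroup `S` with Frobenius number `F`
and genera `G_k = ∑_{s∈Δ} s^k`, for every `r ≥ 1`, in `ℚ`:
`2G_{2r} + ∑_{q=1}^{2r} (−1)^q C(2r,q) F^q G_{2r−q}
  = F^{2r+1}/(2r+1) + F^{2r}/2 + ∑_{q=1}^{2r−1} C(2r,q−1) B_{2r−q+1} F^q / q`,
where `B_k` is the k-th Bernoulli number. -/
theorem symmetric_semigroup_genera_recurrence
    (S : Set ℕ) (h0 : 0 ∈ S) (hadd : ∀ a ∈ S, ∀ b ∈ S, a + b ∈ S)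
    (Δ : Set ℕ) (hΔ : Δ = {n : ℕ | 0 < n ∧ n ∉ S})
    (hfin : Δ.Finite)
    (F : ℕ) (hFgap : F ∈ Δ) (hFmax : ∀ s ∈ Δ, s ≤ F)
    (hsym : ∀ n : ℤ, (∃ s ∈ S, (s : ℤ) = n) ↔ ¬ (∃ s ∈ S, (s : ℤ) = (F : ℤ) - n))
    (G : ℕ → ℚ) (hG : ∀ k, G k = ∑ s ∈ hfin.toFinset, (s : ℚ) ^ k) :
    ∀ r : ℕ, 1 ≤ r →
      2 * G (2 * r)
        + ∑ q ∈ Finset.Icc 1 (2 * r),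
            (-1 : ℚ) ^ q * ((2 * r).choose q) * (F : ℚ) ^ q * G (2 * r - q)
      = (F : ℚ) ^ (2 * r + 1) / (2 * r + 1) + (F : ℚ) ^ (2 * r) / 2
        + ∑ q ∈ Finset.Icc 1 (2 * r - 1),
            ((2 * r).choose (q - 1)) * bernoulli (2 * r - q + 1) * (F : ℚ) ^ q / q := by
  classical
  intro r hr
  set D := hfin.toFinset with hDdef
  have hΔmem : ∀ s : ℕ, s ∈ D ↔ 0 < s ∧ s ∉ S := by
    intro s
    rw [hDdef, Set.Finite.mem_toFinset, hΔ]
    rfl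
  have hFD : F ∈ D := hfin.mem_toFinset.mpr hFgap
  have hFfacts : 0 < F ∧ F ∉ S := (hΔmem F).mp hFD
  have hDle : ∀ s ∈ D, s ≤ F := fun s hs => hFmax s (hfin.mem_toFinset.mp hs)
  -- translate the symmetry condition to naturals
  have hmemS : ∀ n : ℕ, (∃ s ∈ S, (s : ℤ) = (n : ℤ)) ↔ n ∈ S := by
    intro n
    constructor
    · rintro ⟨s, hs, h⟩
      have : s = n := by exact_mod_cast h
      rwa [this] at hs
    · intro h
      exact ⟨n, h, rfl⟩
  have sym' : ∀ n : ℕ, n ≤ F → (n ∈ S ↔ F - n ∉ S) := by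
    intro n hn
    have h := hsym (n : ℤ)
    rw [hmemS] at h
    rw [show (F : ℤ) - (n : ℤ) = ((F - n : ℕ) : ℤ) from (Nat.cast_sub hn).symm] at h
    rwa [hmemS] at h
  -- the set of "filled" slots in [0, F]
  set T := (Finset.range (F + 1)).filter (· ∈ S) with hTdef
  -- D and T partition range (F+1)
  have hdisj : Disjoint D T := by
    rw [Finset.disjoint_left]
    intro a haD haT
    exact ((hΔmem a).mp haD).2 ((Finset.mem_filter.mp haT).2)
  have hunion : D ∪ T = Finset.range (F + 1) := by
    apply Finset.ext
    intro k
    simp only [Finset.mem_union, Finset.mem_range, hTdef, Finset.mem_filter]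
    constructor
    · rintro (hk | hk)
      · exact Nat.lt_succ_of_le (hDle k hk)
      · exact hk.1
    · intro hk
      by_cases hkS : k ∈ S
      · exact Or.inr ⟨hk, hkS⟩
      · refine Or.inl ((hΔmem k).mpr ⟨?_, hkS⟩)
        rcases Nat.eq_zero_or_pos k with h | h
        · exact absurd (h ▸ h0) hkS
        · exact h
  -- the reflection bijection between T and D
  have hbij : ∑ t ∈ T, (t : ℚ) ^ (2 * r) = ∑ s ∈ D, ((F : ℚ) - s) ^ (2 * r) := by
    apply Finset.sum_nbij' (i := fun t => F - t) (j := fun s => F - s)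
    · intro t ht
      rw [hTdef, Finset.mem_filter, Finset.mem_range] at ht
      obtain ⟨htF, htS⟩ := ht
      have htF' : t ≤ F := Nat.lt_succ_iff.mp htF
      refine (hΔmem _).mpr ⟨?_, (sym' t htF').mp htS⟩
      have : t ≠ F := fun h => hFfacts.2 (h ▸ htS)
      omega
    · intro s hs
      have hsF := hDle s hs
      have hsS := ((hΔmem s).mp hs).2
      rw [hTdef, Finset.mem_filter, Finset.mem_range]
      constructor
      · omega
      · by_contra h
        exact hsS ((sym' s hsF).mpr h)
    · intro t ht
      rw [hTdef, Finset.mem_filter, Finset.mem_range] at ht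
      omega
    · intro s hs
      have := hDle s hs
      omega
    · intro t ht
      rw [hTdef, Finset.mem_filter, Finset.mem_range] at ht
      have htF : t ≤ F := by omega
      rw [Nat.cast_sub htF]
      ring_nf
  -- counting identity
  have hcount : ∑ k ∈ Finset.range (F + 1), (k : ℚ) ^ (2 * r)
      = G (2 * r) + ∑ s ∈ D, ((F : ℚ) - s) ^ (2 * r) := by
    rw [← hunion, Finset.sum_union hdisj, hG, hbij]
  -- binomial expansion of the reflected sum
  have hq2 : ∀ q ≤ 2 * r, (-1 : ℚ) ^ (2 * r - q) = (-1) ^ q := by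
    intro q hq
    have h1 : 2 * r - q + q = 2 * r := Nat.sub_add_cancel hq
    have h2 : (-1 : ℚ) ^ (2 * r) = 1 := by
      rw [pow_mul]; norm_num
    have h3 : (-1 : ℚ) ^ q * (-1 : ℚ) ^ q = 1 := by
      rw [← pow_add, ← two_mul, pow_mul]; norm_num
    calc (-1 : ℚ) ^ (2 * r - q) = (-1 : ℚ) ^ (2 * r - q) * ((-1) ^ q * (-1) ^ q) := by
          rw [h3, mul_one]
      _ = ((-1 : ℚ) ^ (2 * r - q + q)) * (-1) ^ q := by rw [pow_add]; ring
      _ = (-1 : ℚ) ^ q := by rw [h1, h2, one_mul]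
  have hexp : ∑ s ∈ D, ((F : ℚ) - s) ^ (2 * r)
      = ∑ q ∈ Finset.range (2 * r + 1),
          (-1 : ℚ) ^ q * ((2 * r).choose q) * (F : ℚ) ^ q * G (2 * r - q) := by
    have step : ∀ s ∈ D, ((F : ℚ) - s) ^ (2 * r)
        = ∑ q ∈ Finset.range (2 * r + 1),
            (-1 : ℚ) ^ q * ((2 * r).choose q) * (F : ℚ) ^ q * (s : ℚ) ^ (2 * r - q) := by
      intro s _
      rw [sub_eq_add_neg, add_pow]
      refine Finset.sum_congr rfl fun q hq => ?_
      have hq' : q ≤ 2 * r := Nat.lt_succ_iff.mp (Finset.mem_range.mp hq)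
      rw [neg_pow, hq2 q hq']
      ring
    rw [Finset.sum_congr rfl step, Finset.sum_comm]
    refine Finset.sum_congr rfl fun q _ => ?_
    rw [hG, Finset.mul_sum]
  -- LHS equals the power sum
  have hLHS : 2 * G (2 * r)
      + ∑ q ∈ Finset.Icc 1 (2 * r),
          (-1 : ℚ) ^ q * ((2 * r).choose q) * (F : ℚ) ^ q * G (2 * r - q)
      = ∑ k ∈ Finset.range (F + 1), (k : ℚ) ^ (2 * r) := by
    have hsplit : ∑ q ∈ Finset.range (2 * r + 1),
        (-1 : ℚ) ^ q * ((2 * r).choose q) * (F : ℚ) ^ q * G (2 * r - q)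
        = G (2 * r) + ∑ q ∈ Finset.Icc 1 (2 * r),
            (-1 : ℚ) ^ q * ((2 * r).choose q) * (F : ℚ) ^ q * G (2 * r - q) := by
      rw [Finset.sum_range_succ']
      simp only [pow_zero, Nat.choose_zero_right, Nat.cast_one, one_mul, mul_one, Nat.sub_zero]
      rw [add_comm]
      congr 1
      rw [show Finset.Icc 1 (2 * r) = Finset.Ico 1 (2 * r + 1) from
          (Finset.Ico_add_one_right_eq_Icc 1 (2 * r)).symm, Finset.sum_Ico_eq_sum_range]
      refine Finset.sum_congr rfl fun i _ => by rw [add_comm 1 i]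
    rw [hcount, hexp, hsplit]
    ring
  rw [hLHS]
  -- now Faulhaber for the RHS
  have h2r : (1 : ℕ) ≤ 2 * r := by omega
  have hF : ∑ k ∈ Finset.range (F + 1), (k : ℚ) ^ (2 * r)
      = ∑ i ∈ Finset.range (2 * r + 1),
          bernoulli' i * ((2 * r + 1).choose i) * (F : ℚ) ^ (2 * r + 1 - i)
            / (((2 * r : ℕ) : ℚ) + 1) := by
    have h1 : ∑ k ∈ Finset.range (F + 1), (k : ℚ) ^ (2 * r)
        = ∑ k ∈ Finset.Ico 1 (F + 1), (k : ℚ) ^ (2 * r) := by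
      rw [Finset.range_eq_Ico, Finset.sum_eq_sum_Ico_succ_bot (by omega)]
      rw [show ((0 : ℕ) : ℚ) ^ (2 * r) = 0 from by rw [Nat.cast_zero, zero_pow (by omega)],
        zero_add]
    rw [h1, sum_Ico_pow F (2 * r)]
  rw [hF]
  -- split off the i = 0 and i = 1 terms
  have h2r1 : (((2 * r : ℕ) : ℚ) + 1) ≠ 0 := by positivity
  set f : ℕ → ℚ := fun i =>
    bernoulli' i * ((2 * r + 1).choose i) * (F : ℚ) ^ (2 * r + 1 - i)
      / (((2 * r : ℕ) : ℚ) + 1) with hfdef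
  have hsum1 : ∑ i ∈ Finset.range (2 * r + 1), f i
      = (∑ i ∈ Finset.range (2 * r - 1), f (i + 2)) + f 1 + f 0 := by
    rw [Finset.sum_range_succ']
    congr 1
    have h2r' : 2 * r = (2 * r - 1) + 1 := by omega
    rw [show ∑ i ∈ Finset.range (2 * r), f (i + 1)
        = ∑ i ∈ Finset.range ((2 * r - 1) + 1), f (i + 1) from by rw [← h2r'],
      Finset.sum_range_succ']
  have hf0 : f 0 = (F : ℚ) ^ (2 * r + 1) / (2 * r + 1) := by
    simp only [hfdef, bernoulli'_zero, Nat.choose_zero_right, Nat.cast_one, one_mul,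
      Nat.sub_zero]
    push_cast
    ring
  have hf1 : f 1 = (F : ℚ) ^ (2 * r) / 2 := by
    simp only [hfdef, bernoulli'_one, Nat.choose_one_right]
    rw [show 2 * r + 1 - 1 = 2 * r from rfl]
    have : ((2 * r + 1 : ℕ) : ℚ) = ((2 * r : ℕ) : ℚ) + 1 := by push_cast; ring
    rw [this]
    field_simp
  have htail : ∑ i ∈ Finset.range (2 * r - 1), f (i + 2)
      = ∑ q ∈ Finset.Icc 1 (2 * r - 1),
          ((2 * r).choose (q - 1)) * bernoulli (2 * r - q + 1) * (F : ℚ) ^ q / q := by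
    apply Finset.sum_nbij' (i := fun i => 2 * r - 1 - i) (j := fun q => 2 * r - 1 - q)
    · intro i hi
      rw [Finset.mem_range] at hi
      rw [Finset.mem_Icc]
      omega
    · intro q hq
      rw [Finset.mem_Icc] at hq
      rw [Finset.mem_range]
      omega
    · intro i hi
      rw [Finset.mem_range] at hi
      omega
    · intro q hq
      rw [Finset.mem_Icc] at hq
      omega
    · intro i hi
      rw [Finset.mem_range] at hi
      set q := 2 * r - 1 - i with hqdef
      have hq1 : 1 ≤ q := by omega
      have hq2r : q ≤ 2 * r - 1 := by omega
      have hi2 : i + 2 = 2 * r - q + 1 := by omega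
      have hpow : 2 * r + 1 - (2 * r - q + 1) = q := by omega
      have hqne : (q : ℚ) ≠ 0 := by positivity
      rw [hfdef]
      simp only
      rw [hi2, hpow]
      have hb : bernoulli' (2 * r - q + 1) = bernoulli (2 * r - q + 1) := by
        rw [bernoulli_eq_bernoulli'_of_ne_one (by omega)]
      have hch : (2 * r + 1).choose (2 * r - q + 1) = (2 * r + 1).choose q := by
        rw [show 2 * r - q + 1 = 2 * r + 1 - q from by omega, Nat.choose_symm (by omega)]
      rw [hb, hch]
      have hkey : ((2 * r + 1).choose q : ℚ) * q
          = (((2 * r : ℕ) : ℚ) + 1) * ((2 * r).choose (q - 1)) := by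
        have h := Nat.add_one_mul_choose_eq (2 * r) (q - 1)
        rw [show q - 1 + 1 = q from by omega] at h
        exact_mod_cast h.symm
      rw [div_eq_div_iff h2r1 hqne]
      linear_combination bernoulli (2 * r - q + 1) * (F : ℚ) ^ q * hkey
  rw [hsum1, hf0, hf1, htail]
  ring
end

section
/- Let S be a symmetric numerical semigroup with Frobenius number F and genera G_k = ∑_{s∈Δ} s^k. Then G_2 = F·G_1 − F(F² − 1)/12. -/
open Finset

lemma sum_range_id_q (N : ℕ) : ∑ i ∈ Finset.range N, (i : ℚ) = N * (N - 1) / 2 := by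
  induction N with
  | zero => simp
  | succ n ih => rw [Finset.sum_range_succ, ih]; push_cast; ring

lemma sum_range_sq_q (N : ℕ) :
    ∑ i ∈ Finset.range N, (i : ℚ) ^ 2 = N * (N - 1) * (2 * N - 1) / 6 := by
  induction N with
  | zero => simp
  | succ n ih => rw [Finset.sum_range_succ, ih]; push_cast; ring

/-- For a symmetric numerical semigroup `S` with Frobenius number `F`
and genera `G_k = ∑_{s∈Δ} s^k`, one has `G₂ = F·G₁ − F(F² − 1)/12`. -/
theorem symmetric_semigroup_G2
    (S : Set ℕ) (h0 : 0 ∈ S) (hadd : ∀ a ∈ S, ∀ b ∈ S, a + b ∈ S)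
    (Δ : Set ℕ) (hΔ : Δ = {n : ℕ | 0 < n ∧ n ∉ S})
    (hfin : Δ.Finite)
    (F : ℕ) (hFgap : F ∈ Δ) (hFmax : ∀ s ∈ Δ, s ≤ F)
    (hsym : ∀ n : ℤ, (∃ s ∈ S, (s : ℤ) = n) ↔ ¬ (∃ s ∈ S, (s : ℤ) = (F : ℤ) - n)) :
    (∑ s ∈ hfin.toFinset, (s : ℚ) ^ 2)
      = (F : ℚ) * (∑ s ∈ hfin.toFinset, (s : ℚ))
        - (F : ℚ) * ((F : ℚ) ^ 2 - 1) / 12 := by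
  set D := hfin.toFinset with hD
  have hmem : ∀ n, n ∈ D ↔ 0 < n ∧ n ∉ S := by
    intro n
    rw [hD, hfin.mem_toFinset, hΔ]
    rfl
  have hFD : F ∈ D := hfin.mem_toFinset.2 hFgap
  have hFle : ∀ n ∈ D, n ≤ F := fun n hn => hFmax n (hfin.mem_toFinset.1 hn)
  have hex : ∀ n : ℕ, (∃ s ∈ S, (s : ℤ) = (n : ℤ)) ↔ n ∈ S := by
    intro n
    constructor
    · rintro ⟨s, hs, he⟩
      obtain rfl : s = n := by exact_mod_cast he
      exact hs
    · exact fun h => ⟨n, h, rfl⟩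
  have hSiff : ∀ n, n ≤ F → (n ∈ S ↔ F - n ∉ S) := by
    intro n hn
    have hc : ((F - n : ℕ) : ℤ) = (F : ℤ) - n := by
      push_cast [Nat.cast_sub hn]; ring
    rw [← hex n, ← hex (F - n), hc]
    exact hsym n
  set D' := D.image (fun n => F - n) with hD'
  have hmem' : ∀ m, m ∈ D' ↔ m < F ∧ m ∈ S := by
    intro m
    simp only [hD', Finset.mem_image]
    constructor
    · rintro ⟨n, hn, rfl⟩
      obtain ⟨hn0, hnS⟩ := (hmem n).1 hn
      have hnF := hFle n hn
      refine ⟨by omega, ?_⟩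
      by_contra hFnS
      exact hnS ((hSiff n hnF).mpr hFnS)
    · rintro ⟨hmF, hmS⟩
      refine ⟨F - m, (hmem _).2 ⟨by omega, (hSiff m (le_of_lt hmF)).1 hmS⟩, by omega⟩
  have hdisj : Disjoint D D' := by
    rw [Finset.disjoint_left]
    intro m hm hm'
    exact ((hmem m).1 hm).2 ((hmem' m).1 hm').2
  have hunion : D ∪ D' = Finset.range (F + 1) := by
    ext m
    constructor
    · intro hm
      rcases Finset.mem_union.1 hm with h | h
      · exact Finset.mem_range.2 (Nat.lt_succ_of_le (hFle m h))
      · exact Finset.mem_range.2 (by have := (hmem' m).1 h; omega)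
    · intro hm
      have hmF : m ≤ F := by have := Finset.mem_range.1 hm; omega
      by_cases hms : m ∈ S
      · rcases Nat.lt_or_ge m F with h | h
        · exact Finset.mem_union_right _ ((hmem' m).2 ⟨h, hms⟩)
        · exfalso
          have hE := (hmem F).1 hFD
          have : m = F := le_antisymm hmF h
          subst this
          exact hE.2 hms
      · refine Finset.mem_union_left _ ((hmem m).2 ⟨?_, hms⟩)
        rcases Nat.eq_zero_or_pos m with rfl | h
        · exact absurd h0 hms
        · exact h
  have hsum : ∀ f : ℕ → ℚ,
      ∑ i ∈ Finset.range (F + 1), f i = ∑ n ∈ D, f n + ∑ n ∈ D, f (F - n) := by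
    intro f
    rw [← hunion, Finset.sum_union hdisj, Finset.sum_image]
    intro a ha b hb hab
    have := hFle a ha
    have := hFle b hb
    simp only at hab
    omega
  have hcast : ∀ n ∈ D, ((F - n : ℕ) : ℚ) = (F : ℚ) - (n : ℚ) := by
    intro n hn
    have := hFle n hn
    push_cast [Nat.cast_sub this]
    ring
  set G1 := ∑ n ∈ D, (n : ℚ) with hG1
  set G2 := ∑ n ∈ D, (n : ℚ) ^ 2 with hG2
  set g := (D.card : ℚ) with hg
  have E1 : G1 + (g * F - G1) = (F + 1) * F / 2 := by
    have h := hsum (fun i => (i : ℚ))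
    rw [sum_range_id_q] at h
    have h2 : ∑ n ∈ D, ((F - n : ℕ) : ℚ) = ∑ n ∈ D, ((F : ℚ) - n) :=
      Finset.sum_congr rfl hcast
    rw [h2] at h
    rw [Finset.sum_sub_distrib, Finset.sum_const, nsmul_eq_mul] at h
    push_cast at h ⊢
    linarith [h]
  have E2 : G2 + (g * F ^ 2 - 2 * F * G1 + G2) = (F + 1) * F * (2 * F + 1) / 6 := by
    have h := hsum (fun i => (i : ℚ) ^ 2)
    rw [sum_range_sq_q] at h
    have h2 : ∑ n ∈ D, ((F - n : ℕ) : ℚ) ^ 2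
        = ∑ n ∈ D, ((F : ℚ) ^ 2 - 2 * F * n + n ^ 2) := by
      refine Finset.sum_congr rfl fun n hn => ?_
      rw [hcast n hn]; ring
    rw [h2] at h
    simp only [Finset.sum_add_distrib, Finset.sum_sub_distrib, Finset.sum_const,
      nsmul_eq_mul, Finset.mul_sum] at h
    push_cast at h ⊢
    rw [hG2, hG1, hg]
    rw [Finset.mul_sum]
    linarith [h]
  have hF0 : 0 < F := ((hmem F).1 hFD).1
  have hFq : (F : ℚ) ≠ 0 := by positivity
  have hgval : g * F = (F + 1) * F / 2 := by linarith [E1]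
  show G2 = F * G1 - F * ((F : ℚ) ^ 2 - 1) / 12
  have hgval2 : g = (F + 1) / 2 := by
    have h : g * F = (((F : ℚ) + 1) / 2) * F := by rw [hgval]; ring
    exact mul_right_cancel₀ hFq h
  rw [hgval2] at E2
  linarith [E2]
end

section
/- Let x_1,…,x_5, Q, π, K_0, K_1, K_2 be real numbers with π ≠ 0 and Q = 2K_0, and set X_k = ∑_{j=1}^5 x_j^k. Assume 2X_3 − 3QX_2 + 2Q³ = 6π, 2X_5 − 5QX_4 + 10Q²X_3 − 10Q³X_2 + 6Q⁵ = 120K_1π, and (2X_5 − 5QX_4 + (20/3)Q²X_3 − 5Q³X_2 + (8/3)Q⁵)·Q = 120K_2π. Then K_2 = 2(K_1 − K_0²/3)·K_0. -/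
/-- For the power sums `X_k = ∑_{j=1}^5 xⱼ^k` of the five first-syzygy
degrees of a symmetric (not CI) 4-generated semigroup, with `Q = 2K₀` and `π ≠ 0`,
the relations
`2X₃ − 3QX₂ + 2Q³ = 6π`,
`2X₅ − 5QX₄ + 10Q²X₃ − 10Q³X₂ + 6Q⁵ = 120K₁π`, and
`(2X₅ − 5QX₄ + (20/3)Q²X₃ − 5Q³X₂ + (8/3)Q⁵)·Q = 120K₂π`
imply `K₂ = 2(K₁ − K₀²/3)K₀`. -/
theorem symmetric_S4_K2_relation
    (x₁ x₂ x₃ x₄ x₅ Q π K₀ K₁ K₂ : ℝ) (hπ : π ≠ 0) (hQ : Q = 2 * K₀)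
    (X₂ X₃ X₄ X₅ : ℝ)
    (hX₂ : X₂ = x₁ ^ 2 + x₂ ^ 2 + x₃ ^ 2 + x₄ ^ 2 + x₅ ^ 2)
    (hX₃ : X₃ = x₁ ^ 3 + x₂ ^ 3 + x₃ ^ 3 + x₄ ^ 3 + x₅ ^ 3)
    (hX₄ : X₄ = x₁ ^ 4 + x₂ ^ 4 + x₃ ^ 4 + x₄ ^ 4 + x₅ ^ 4)
    (hX₅ : X₅ = x₁ ^ 5 + x₂ ^ 5 + x₃ ^ 5 + x₄ ^ 5 + x₅ ^ 5)
    (h3 : 2 * X₃ - 3 * Q * X₂ + 2 * Q ^ 3 = 6 * π)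
    (h5 : 2 * X₅ - 5 * Q * X₄ + 10 * Q ^ 2 * X₃ - 10 * Q ^ 3 * X₂ + 6 * Q ^ 5
        = 120 * K₁ * π)
    (h5' : (2 * X₅ - 5 * Q * X₄ + 20 / 3 * Q ^ 2 * X₃ - 5 * Q ^ 3 * X₂
            + 8 / 3 * Q ^ 5) * Q = 120 * K₂ * π) :
    K₂ = 2 * (K₁ - K₀ ^ 2 / 3) * K₀ := by
  have key : K₂ * (120 * π) = (2 * (K₁ - K₀ ^ 2 / 3) * K₀) * (120 * π) := by
    subst hQ
    linear_combination (2 * K₀) * h5 - h5' - (5 / 3) * (2 * K₀) ^ 3 * h3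
  have h120 : (120 : ℝ) * π ≠ 0 := by positivity
  exact mul_right_cancel₀ h120 key
end

section
/- Let d_1, d_2 ≥ 2 be coprime integers and let S = ⟨d_1, d_2⟩ be the numerical semigroup they generate, with set of gaps Δ = ℤ_{>0} ∖ S. Then the second genus G_2 = ∑_{s∈Δ} s² satisfies G_2 = ((π − σ + 1)/2) · (π(π − σ)/6), where π = d_1 d_2 and σ = d_1 + d_2. -/
open Finset

/-- Sum of a quadratic polynomial over `Ioo 0 n`. -/
lemma sum_Ioo_poly (c0 c1 c2 : ℚ) : ∀ n : ℕ, 1 ≤ n →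
    ∑ i ∈ Finset.Ioo 0 n, (c0 + c1*(i:ℚ) + c2*(i:ℚ)^2)
      = c0*((n:ℚ)-1) + c1*((n:ℚ)*((n:ℚ)-1)/2)
        + c2*((n:ℚ)*((n:ℚ)-1)*(2*(n:ℚ)-1)/6) := by
  intro n hn
  induction n with
  | zero => omega
  | succ k ih =>
    rcases Nat.eq_zero_or_pos k with hk | hk
    · subst hk
      have h0 : Finset.Ioo 0 1 = (∅ : Finset ℕ) := by ext i; simp; omega
      rw [h0]; simp
    · have hins : Finset.Ioo 0 (k+1) = insert k (Finset.Ioo 0 k) := by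
        ext i; simp [Finset.mem_Ioo, Finset.mem_insert]; omega
      rw [hins, Finset.sum_insert (by simp), ih hk]
      push_cast; ring

/-- A triangle point gives a non-representable number. -/
lemma notin_S_aux (d₁ d₂ : ℕ) (hd₂ : 2 ≤ d₂) (hcop : Nat.Coprime d₁ d₂)
    (a b : ℕ) (ha : 0 < a) (hb : 0 < b) (hlt : a*d₁ + b*d₂ < d₁*d₂) :
    ¬ ∃ x y : ℕ, d₁*d₂ - (a*d₁ + b*d₂) = x*d₁ + y*d₂ := by
  rintro ⟨x, y, h⟩
  have h1 : d₁*d₂ = x*d₁ + y*d₂ + (a*d₁ + b*d₂) := (Nat.sub_eq_iff_eq_add hlt.le).mp h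
  have E : (a+x)*d₁ + (b+y)*d₂ = d₁*d₂ := by
    calc (a+x)*d₁ + (b+y)*d₂ = x*d₁ + y*d₂ + (a*d₁ + b*d₂) := by ring
    _ = d₁*d₂ := h1.symm
  have hby : (b+y)*d₂ ≤ d₁*d₂ := E ▸ Nat.le_add_left _ _
  have hby' : b + y ≤ d₁ := Nat.le_of_mul_le_mul_right hby (by omega)
  have hsub : (a+x)*d₁ = (d₁ - (b+y))*d₂ := by
    have h2 : (d₁ - (b+y))*d₂ = d₁*d₂ - (b+y)*d₂ := Nat.sub_mul _ _ _
    rw [h2]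
    exact Nat.eq_sub_of_add_eq E
  have hdvd : d₂ ∣ (a+x)*d₁ := ⟨d₁ - (b+y), by rw [hsub, mul_comm]⟩
  have hdvd2 : d₂ ∣ a + x := (Nat.Coprime.dvd_of_dvd_mul_right hcop.symm) hdvd
  have hge : d₂ ≤ a + x := Nat.le_of_dvd (by omega) hdvd2
  have h3 : d₂*d₁ ≤ (a+x)*d₁ := Nat.mul_le_mul_right _ hge
  have h4 : 1*d₂ ≤ (b+y)*d₂ := Nat.mul_le_mul_right _ (by omega)
  have h5 : d₂*d₁ + 1*d₂ ≤ d₁*d₂ := by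
    calc d₂*d₁ + 1*d₂ ≤ (a+x)*d₁ + (b+y)*d₂ := Nat.add_le_add h3 h4
    _ = d₁*d₂ := E
  rw [mul_comm d₂ d₁, one_mul] at h5
  omega

/-- Every gap has a triangle representation. -/
lemma exists_rep_aux (d₁ d₂ : ℕ) (hd₁ : 2 ≤ d₁) (hd₂ : 2 ≤ d₂) (hcop : Nat.Coprime d₁ d₂)
    (n : ℕ) (hn : 0 < n) (hns : ¬ ∃ x y : ℕ, n = x*d₁ + y*d₂) :
    ∃ a b : ℕ, 0 < a ∧ a < d₂ ∧ 0 < b ∧ b < d₁ ∧ a*d₁ + b*d₂ < d₁*d₂ ∧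
      d₁*d₂ - (a*d₁ + b*d₂) = n := by
  haveI : NeZero d₂ := ⟨by omega⟩
  set a : ℕ := ((-(n : ZMod d₂)) * (d₁ : ZMod d₂)⁻¹).val with ha_def
  have hunit : IsUnit ((d₁ : ℕ) : ZMod d₂) := (ZMod.isUnit_iff_coprime d₁ d₂).mpr hcop
  have ha2 : (a : ZMod d₂) = (-(n : ZMod d₂)) * (d₁ : ZMod d₂)⁻¹ := by
    rw [ha_def, ZMod.natCast_val, ZMod.cast_id]
  have hmod : ((a * d₁ + n : ℕ) : ZMod d₂) = 0 := by
    push_cast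
    rw [ha2, mul_assoc, ZMod.inv_mul_of_unit _ hunit]
    ring
  have hdvd : d₂ ∣ a * d₁ + n := (ZMod.natCast_eq_zero_iff _ _).mp hmod
  have halt : a < d₂ := ZMod.val_lt _
  have ha0 : 0 < a := by
    rcases Nat.eq_zero_or_pos a with h0 | h
    · exfalso
      apply hns
      rw [h0, zero_mul, zero_add] at hdvd
      exact ⟨0, n / d₂, by rw [zero_mul, zero_add, Nat.div_mul_cancel hdvd]⟩
    · exact h
  set k := (a * d₁ + n) / d₂ with hk_def
  have e1 : k * d₂ = a * d₁ + n := Nat.div_mul_cancel hdvd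
  have hk1 : 1 ≤ k := by
    rcases Nat.eq_zero_or_pos k with h0 | h
    · exfalso; rw [h0, zero_mul] at e1; omega
    · exact h
  by_cases hkd : d₁ ≤ k
  · exfalso
    apply hns
    refine ⟨d₂ - a, k - d₁, ?_⟩
    have e1z : (k : ℤ) * d₂ = a * d₁ + n := by exact_mod_cast e1
    zify [halt.le, hkd]
    linarith
  · push_neg at hkd
    have e2 : a*d₁ + (d₁ - k)*d₂ + n = d₁*d₂ := by
      have e1z : (k : ℤ) * d₂ = a * d₁ + n := by exact_mod_cast e1
      zify [hkd.le]
      linarith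
    refine ⟨a, d₁ - k, ha0, halt, by omega, by omega, ?_, by omega⟩
    have := lt_add_of_pos_right (a*d₁ + (d₁-k)*d₂) hn
    omega

/-- Uniqueness of the triangle representation. -/
lemma inj_aux (d₁ d₂ : ℕ) (hd₂ : 2 ≤ d₂) (hcop : Nat.Coprime d₁ d₂)
    (a b a' b' : ℕ) (ha : a < d₂) (ha' : a' < d₂)
    (h : a*d₁ + b*d₂ = a'*d₁ + b'*d₂) : a = a' ∧ b = b' := by
  have main : ∀ a b a' b' : ℕ, a < d₂ → a' < d₂ → a' ≤ a →
      a*d₁ + b*d₂ = a'*d₁ + b'*d₂ → a = a' ∧ b = b' := by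
    intro a b a' b' ha ha' hle h
    have hmul : a'*d₁ ≤ a*d₁ := Nat.mul_le_mul_right _ hle
    have hb : b*d₂ ≤ b'*d₂ := by omega
    have hbb : b ≤ b' := Nat.le_of_mul_le_mul_right hb (by omega)
    have e : (a - a')*d₁ = (b' - b)*d₂ := by
      zify [hle, hbb]
      have hz : (a:ℤ)*d₁ + b*d₂ = a'*d₁ + b'*d₂ := by exact_mod_cast h
      linarith
    have hdvd : d₂ ∣ (a - a')*d₁ := ⟨b' - b, by rw [e, mul_comm]⟩
    have hdvd2 : d₂ ∣ a - a' := (Nat.Coprime.dvd_of_dvd_mul_right hcop.symm) hdvd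
    have h0 : a - a' = 0 := by
      rcases Nat.eq_zero_or_pos (a - a') with h0 | hpos
      · exact h0
      · exfalso
        have := Nat.le_of_dvd hpos hdvd2
        omega
    have haa : a = a' := by omega
    subst haa
    have hb2 : b*d₂ = b'*d₂ := Nat.add_left_cancel h
    exact ⟨rfl, Nat.eq_of_mul_eq_mul_right (by omega) hb2⟩
  rcases le_total a' a with hle | hle
  · exact main a b a' b' ha ha' hle h
  · obtain ⟨h1, h2⟩ := main a' b' a b ha' ha hle h.symm
    exact ⟨h1.symm, h2.symm⟩

/-- No rectangle point lies on the hypotenuse. -/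
lemma ne_pi_aux (d₁ d₂ : ℕ) (hcop : Nat.Coprime d₁ d₂)
    (a b : ℕ) (ha : 0 < a) (halt : a < d₂) : a*d₁ + b*d₂ ≠ d₁*d₂ := by
  intro heq
  have hb : b*d₂ ≤ d₁*d₂ := heq ▸ Nat.le_add_left _ _
  have hble : b ≤ d₁ := Nat.le_of_mul_le_mul_right hb (by omega)
  have hsub : a*d₁ = (d₁ - b)*d₂ := by
    rw [Nat.sub_mul]
    exact Nat.eq_sub_of_add_eq heq
  have hdvd : d₂ ∣ a*d₁ := ⟨d₁ - b, by rw [hsub, mul_comm]⟩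
  have hdvd2 : d₂ ∣ a := (Nat.Coprime.dvd_of_dvd_mul_right hcop.symm) hdvd
  have := Nat.le_of_dvd ha hdvd2
  omega

/-- For coprime `d₁, d₂ ≥ 2` and `S = ⟨d₁, d₂⟩` with gap set `Δ`,
the second genus satisfies `G₂ = ((π − σ + 1)/2) · (π(π − σ)/6)` where
`π = d₁d₂` and `σ = d₁ + d₂`. -/
theorem second_genus_two_generated
    (d₁ d₂ : ℕ) (hd₁ : 2 ≤ d₁) (hd₂ : 2 ≤ d₂) (hcop : Nat.Coprime d₁ d₂)
    (S : Set ℕ) (hS : S = {n : ℕ | ∃ a b : ℕ, n = a * d₁ + b * d₂})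
    (Δ : Set ℕ) (hΔ : Δ = {n : ℕ | 0 < n ∧ n ∉ S})
    (hfin : Δ.Finite) :
    (∑ s ∈ hfin.toFinset, (s : ℚ) ^ 2)
      = (((d₁ : ℚ) * d₂ - ((d₁ : ℚ) + d₂) + 1) / 2)
          * ((d₁ : ℚ) * d₂ * ((d₁ : ℚ) * d₂ - ((d₁ : ℚ) + d₂)) / 6) := by
  subst hS hΔ
  set T : Finset (ℕ × ℕ) :=
    (Finset.Ioo 0 d₂ ×ˢ Finset.Ioo 0 d₁).filter (fun p => p.1*d₁ + p.2*d₂ < d₁*d₂) with hT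
  have hmemT : ∀ p : ℕ × ℕ, p ∈ T ↔
      (0 < p.1 ∧ p.1 < d₂ ∧ 0 < p.2 ∧ p.2 < d₁ ∧ p.1*d₁ + p.2*d₂ < d₁*d₂) := by
    intro p
    simp [hT, Finset.mem_filter, Finset.mem_product, Finset.mem_Ioo, and_assoc]
  -- Step 1: the gap set is the image of T
  have hset : hfin.toFinset = T.image (fun p => d₁*d₂ - (p.1*d₁ + p.2*d₂)) := by
    ext n
    rw [Set.Finite.mem_toFinset, Finset.mem_image]
    simp only [Set.mem_setOf_eq]
    constructor
    · rintro ⟨hn, hns⟩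
      obtain ⟨a, b, h1, h2, h3, h4, h5, h6⟩ := exists_rep_aux d₁ d₂ hd₁ hd₂ hcop n hn hns
      exact ⟨(a, b), (hmemT _).mpr ⟨h1, h2, h3, h4, h5⟩, h6⟩
    · rintro ⟨p, hp, rfl⟩
      obtain ⟨h1, h2, h3, h4, h5⟩ := (hmemT p).mp hp
      exact ⟨Nat.sub_pos_of_lt h5, notin_S_aux d₁ d₂ hd₂ hcop p.1 p.2 h1 h3 h5⟩
  have hinj : ∀ p ∈ T, ∀ q ∈ T,
      d₁*d₂ - (p.1*d₁ + p.2*d₂) = d₁*d₂ - (q.1*d₁ + q.2*d₂) → p = q := by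
    intro p hp q hq h
    obtain ⟨hp1, hp2, hp3, hp4, hp5⟩ := (hmemT p).mp hp
    obtain ⟨hq1, hq2, hq3, hq4, hq5⟩ := (hmemT q).mp hq
    have hXY : p.1*d₁ + p.2*d₂ = q.1*d₁ + q.2*d₂ := by
      rw [← Nat.sub_sub_self hp5.le, h, Nat.sub_sub_self hq5.le]
    obtain ⟨e1, e2⟩ := inj_aux d₁ d₂ hd₂ hcop p.1 p.2 q.1 q.2 hp2 hq2 hXY
    exact Prod.ext e1 e2
  rw [hset, Finset.sum_image hinj]
  -- Step 2: rewrite summand as rational expression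
  have hcast : ∑ p ∈ T, ((d₁*d₂ - (p.1*d₁ + p.2*d₂) : ℕ) : ℚ)^2
      = ∑ p ∈ T, ((d₁:ℚ)*d₂ - ((p.1:ℚ)*d₁ + (p.2:ℚ)*d₂))^2 := by
    apply Finset.sum_congr rfl
    intro p hp
    obtain ⟨h1, h2, h3, h4, h5⟩ := (hmemT p).mp hp
    rw [Nat.cast_sub h5.le]
    push_cast
    ring
  rw [hcast]
  -- Step 3: reflection doubles the sum to the full rectangle
  set F : ℕ × ℕ → ℚ := fun p => ((d₁:ℚ)*d₂ - ((p.1:ℚ)*d₁ + (p.2:ℚ)*d₂))^2 with hF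
  set R : Finset (ℕ × ℕ) := Finset.Ioo 0 d₂ ×ˢ Finset.Ioo 0 d₁ with hR
  have hmemR : ∀ p : ℕ × ℕ, p ∈ R ↔ (0 < p.1 ∧ p.1 < d₂ ∧ 0 < p.2 ∧ p.2 < d₁) := by
    intro p
    simp [hR, Finset.mem_product, Finset.mem_Ioo, and_assoc]
  have hrefl : ∑ p ∈ R.filter (fun p => ¬ (p.1*d₁ + p.2*d₂ < d₁*d₂)), F p
      = ∑ p ∈ T, F p := by
    apply Finset.sum_nbij' (i := fun p : ℕ × ℕ => (d₂ - p.1, d₁ - p.2))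
      (j := fun p : ℕ × ℕ => (d₂ - p.1, d₁ - p.2))
    · intro p hp
      rw [Finset.mem_filter] at hp
      obtain ⟨hpR, hnot⟩ := hp
      obtain ⟨h1, h2, h3, h4⟩ := (hmemR p).mp hpR
      have hgt : d₁*d₂ < p.1*d₁ + p.2*d₂ :=
        lt_of_le_of_ne (not_lt.mp hnot) (ne_pi_aux d₁ d₂ hcop p.1 p.2 h1 h2).symm
      rw [hmemT]
      refine ⟨by omega, by omega, by omega, by omega, ?_⟩
      have hgtz : (d₁:ℤ)*d₂ < (p.1:ℤ)*d₁ + (p.2:ℤ)*d₂ := by exact_mod_cast hgt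
      zify [h2.le, h4.le]
      linarith
    · intro p hp
      obtain ⟨h1, h2, h3, h4, h5⟩ := (hmemT p).mp hp
      rw [Finset.mem_filter]
      constructor
      · rw [hmemR]
        exact ⟨by omega, by omega, by omega, by omega⟩
      · simp only
        have h5z : (p.1:ℤ)*d₁ + (p.2:ℤ)*d₂ < (d₁:ℤ)*d₂ := by exact_mod_cast h5
        rw [not_lt]
        zify [h2.le, h4.le]
        linarith
    · intro p hp
      rw [Finset.mem_filter] at hp
      obtain ⟨h1, h2, h3, h4⟩ := (hmemR p).mp hp.1
      exact Prod.ext (by simp; omega) (by simp; omega)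
    · intro p hp
      obtain ⟨h1, h2, h3, h4, h5⟩ := (hmemT p).mp hp
      exact Prod.ext (by simp; omega) (by simp; omega)
    · intro p hp
      rw [Finset.mem_filter] at hp
      obtain ⟨h1, h2, h3, h4⟩ := (hmemR p).mp hp.1
      simp only [hF]
      rw [Nat.cast_sub h2.le, Nat.cast_sub h4.le]
      ring
  have hdouble : (∑ p ∈ T, F p) + (∑ p ∈ T, F p) = ∑ p ∈ R, F p := by
    conv_rhs => rw [← Finset.sum_filter_add_sum_filter_not R
      (fun p => p.1*d₁ + p.2*d₂ < d₁*d₂) F]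
    rw [hrefl]
  -- Step 4: evaluate the rectangle sum
  have h1 : ∀ a : ℕ, ∑ b ∈ Finset.Ioo 0 d₁, ((d₁:ℚ)*d₂ - ((a:ℚ)*d₁ + (b:ℚ)*d₂))^2
      = ((d₂:ℚ)^2*((d₁:ℚ)*((d₁:ℚ)-1)*(2*(d₁:ℚ)-1)/6))
        + (-(((d₁:ℚ)-1)*(d₁:ℚ)^2*(d₂:ℚ)))*(a:ℚ)
        + ((((d₁:ℚ)-1))*(d₁:ℚ)^2)*(a:ℚ)^2 := by
    intro a
    have hq := sum_Ioo_poly (((d₁:ℚ)*d₂ - (a:ℚ)*d₁)^2)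
      (-2*((d₁:ℚ)*d₂ - (a:ℚ)*d₁)*(d₂:ℚ)) ((d₂:ℚ)^2) d₁ (by omega)
    have hs : ∑ b ∈ Finset.Ioo 0 d₁, ((d₁:ℚ)*d₂ - ((a:ℚ)*d₁ + (b:ℚ)*d₂))^2
        = ∑ b ∈ Finset.Ioo 0 d₁, ((((d₁:ℚ)*d₂ - (a:ℚ)*d₁)^2)
            + (-2*((d₁:ℚ)*d₂ - (a:ℚ)*d₁)*(d₂:ℚ))*(b:ℚ) + ((d₂:ℚ)^2)*(b:ℚ)^2) := by
      apply Finset.sum_congr rfl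
      intro b _
      ring
    rw [hs, hq]
    ring
  have heval : ∑ p ∈ R, F p
      = 2 * ((((d₁ : ℚ) * d₂ - ((d₁ : ℚ) + d₂) + 1) / 2)
          * ((d₁ : ℚ) * d₂ * ((d₁ : ℚ) * d₂ - ((d₁ : ℚ) + d₂)) / 6)) := by
    rw [hR, hF, Finset.sum_product]
    have hout : ∑ a ∈ Finset.Ioo 0 d₂, ∑ b ∈ Finset.Ioo 0 d₁,
        ((d₁:ℚ)*d₂ - ((a:ℚ)*d₁ + (b:ℚ)*d₂))^2
        = ∑ a ∈ Finset.Ioo 0 d₂, (((d₂:ℚ)^2*((d₁:ℚ)*((d₁:ℚ)-1)*(2*(d₁:ℚ)-1)/6))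
          + (-(((d₁:ℚ)-1)*(d₁:ℚ)^2*(d₂:ℚ)))*(a:ℚ)
          + ((((d₁:ℚ)-1))*(d₁:ℚ)^2)*(a:ℚ)^2) :=
      Finset.sum_congr rfl (fun a _ => h1 a)
    rw [hout, sum_Ioo_poly _ _ _ d₂ (by omega)]
    ring
  rw [heval] at hdouble
  linarith
end
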